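/- arXiv:2001.08634 — 13 statements merged into one kernel-verified Lean document; each statement's English description precedes it below -/
import Mathlib

section
/- Let n be a positive integer. If the set A_n of nontrivial small divisors of n is in arithmetic progression, then A_n has at most 5 elements. -/
/-- The set of nontrivial small divisors of `n`:
divisors `d` of `n` with `1 < d < √n` (equivalently `d ^ 2 < n`). -/
def A (n : ℕ) : Finset ℕ := n.divisors.filter (fun d => 1 < d ∧ d ^ 2 < n)

/-- A finite set `S` of positive integers is in arithmetic progression if there are
positive integers `d` (first term) and `a` (common difference) with
`S = {d + i·a : 0 ≤ i ≤ |S| − 1}`. -/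
def IsAP (S : Finset ℕ) : Prop :=
  ∃ d a : ℕ, 0 < d ∧ 0 < a ∧ S = (Finset.range S.card).image (fun i => d + i * a)



lemma odd_dvd_four {g : ℕ} (h4 : g ∣ 4) (h2 : ¬ 2 ∣ g) : g = 1 := by
  have hle : g ≤ 4 := Nat.le_of_dvd (by norm_num) h4
  interval_cases g <;> omega

lemma odd_dvd_six {g : ℕ} (h6 : g ∣ 6) (h2 : ¬ 2 ∣ g) (h3 : ¬ 3 ∣ g) : g = 1 := by
  have hle : g ≤ 6 := Nat.le_of_dvd (by norm_num) h6
  interval_cases g <;> omega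

lemma not3_dvd_nine {g : ℕ} (h9 : g ∣ 9) (h3 : ¬ 3 ∣ g) : g = 1 := by
  have hle : g ≤ 9 := Nat.le_of_dvd (by norm_num) h9
  interval_cases g <;> omega

/-- covering congruence: any prime `r < p` with `r < k` must divide `a`. -/
lemma cover (n p a k : ℕ) (hn : 0 < n) (ha : 0 < a)
    (helem : ∀ i, i < k → (p + i * a) ∣ n ∧ 1 < p + i * a ∧ (p + i * a) ^ 2 < n)
    (hmem : ∀ D, D ∣ n → 1 < D → D ^ 2 < n → ∃ i, i < k ∧ D = p + i * a)
    (hp2n : p ^ 2 < n)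
    (r : ℕ) (hr : r.Prime) (hrp : r < p) (hrk : r < k) : r ∣ a := by
  by_contra hra
  haveI : Fact r.Prime := ⟨hr⟩
  haveI : NeZero r := ⟨hr.pos.ne'⟩
  set j := ((-(p : ZMod r)) * (a : ZMod r)⁻¹).val with hj
  have hjr : j < r := ZMod.val_lt _
  have hu : (a : ZMod r) ≠ 0 := by
    rw [Ne, ZMod.natCast_eq_zero_iff]
    exact hra
  have hcast : ((p + j * a : ℕ) : ZMod r) = 0 := by
    push_cast
    rw [hj, ZMod.natCast_val, ZMod.cast_id, mul_assoc, inv_mul_cancel₀ hu, mul_one,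
      add_neg_cancel]
  have hrd : r ∣ p + j * a := (ZMod.natCast_eq_zero_iff _ _).1 hcast
  have hjk : j < k := lt_trans hjr hrk
  have hrn : r ∣ n := hrd.trans (helem j hjk).1
  obtain ⟨i, _, hi⟩ := hmem r hrn hr.one_lt
    (lt_of_le_of_lt (Nat.pow_le_pow_left (le_of_lt hrp) 2) hp2n)
  have : p ≤ r := hi ▸ Nat.le_add_right p (i * a)
  omega

/-- the first term is not divisible by the common difference's ... : `¬ p ∣ a`. -/
lemma pnotdvda (n p a k : ℕ) (hn : 0 < n) (ha : 0 < a) (hk : 6 ≤ k) (hp1 : 1 < p)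
    (helem : ∀ i, i < k → (p + i * a) ∣ n ∧ 1 < p + i * a ∧ (p + i * a) ^ 2 < n)
    (hmem : ∀ D, D ∣ n → 1 < D → D ^ 2 < n → ∃ i, i < k ∧ D = p + i * a) :
    ¬ p ∣ a := by
  intro hpa
  obtain ⟨c, hc⟩ := hpa
  have hc0 : 0 < c := by
    rcases Nat.eq_zero_or_pos c with h | h
    · subst h; simp at hc; omega
    · exact h
  have e1 := helem 1 (by omega)
  have h1cd : (1 + c) ∣ n := by
    refine dvd_trans ⟨p, ?_⟩ e1.1
    rw [hc]; ring
  have h1clt : (1 + c) < p + 1 * a := by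
    have : p * c ≥ 2 * c := Nat.mul_le_mul_right c hp1
    omega
  have h1csq : (1 + c) ^ 2 < n :=
    lt_of_le_of_lt (Nat.pow_le_pow_left (le_of_lt h1clt) 2) e1.2.2
  obtain ⟨j, hjk, hj⟩ := hmem (1 + c) h1cd (by omega) h1csq
  rcases Nat.eq_zero_or_pos j with hj0 | hj0
  · subst hj0
    simp only [zero_mul, add_zero] at hj
    -- p = 1 + c, a = p * c = (c+1)*c
    have hp : p = c + 1 := by omega
    have e2 := helem 2 (by omega)
    have h2cd : (2 * c + 1) ∣ n := by
      refine dvd_trans ⟨c + 1, ?_⟩ e2.1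
      rw [hc, hp]; ring
    have h2clt : 2 * c + 1 ≤ p + 2 * a := by
      rw [hc, hp]; nlinarith
    have h2csq : (2 * c + 1) ^ 2 < n :=
      lt_of_le_of_lt (Nat.pow_le_pow_left h2clt 2) e2.2.2
    obtain ⟨j', hj'k, hj'⟩ := hmem (2 * c + 1) h2cd (by omega) h2csq
    rw [hc, hp] at hj'
    rcases Nat.eq_zero_or_pos j' with h0 | h0
    · subst h0; simp at hj'; omega
    · have hle : (c + 1) * c ≤ j' * ((c + 1) * c) := Nat.le_mul_of_pos_left _ h0
      nlinarith
  · have hle : a ≤ j * a := Nat.le_mul_of_pos_left _ hj0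
    have h2 : p * c ≥ 2 * c := Nat.mul_le_mul_right c hp1
    have h3 : a = p * c := hc
    omega


lemma key2 (n a k : ℕ) (hn : 0 < n) (ha : 0 < a) (hk : 6 ≤ k)
    (helem : ∀ i, i < k → (2 + i * a) ∣ n ∧ 1 < 2 + i * a ∧ (2 + i * a) ^ 2 < n)
    (hmem : ∀ D, D ∣ n → 1 < D → D ^ 2 < n → ∃ i, i < k ∧ D = 2 + i * a)
    (hpa : ¬ 2 ∣ a) : False := by
  -- first, a = 1
  have ha1 : a = 1 := by
    by_contra hne
    have ha3 : 3 ≤ a := by omega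
    have e2 := helem 2 (by omega)
    have h1d : (1 + a) ∣ n := by
      refine dvd_trans ⟨2, ?_⟩ e2.1
      ring
    have h1sq : (1 + a) ^ 2 < n :=
      lt_of_le_of_lt (Nat.pow_le_pow_left (by omega : 1 + a ≤ 2 + 2 * a) 2) e2.2.2
    obtain ⟨j, hjk, hj⟩ := hmem (1 + a) h1d (by omega) h1sq
    rcases Nat.eq_zero_or_pos j with h0 | h0
    · subst h0; simp at hj; omega
    · have hle : a ≤ j * a := Nat.le_mul_of_pos_left _ h0
      omega
  subst ha1
  -- every t in [2, k+1] divides n and has small square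
  have mem_all : ∀ t, 2 ≤ t → t ≤ k + 1 → t ∣ n ∧ t ^ 2 < n := by
    intro t h2 hM
    have h := helem (t - 2) (by omega)
    rw [show 2 + (t - 2) * 1 = t by omega] at h
    exact ⟨h.1, h.2.2⟩
  have hle : ∀ D, D ∣ n → 1 < D → D ^ 2 < n → D ≤ k + 1 := by
    intro D h1 h2 h3
    obtain ⟨i, hik, hD⟩ := hmem D h1 h2 h3
    omega
  set m := if k % 2 = 0 then k + 1 else k with hm
  have hmfacts : 7 ≤ m ∧ m % 2 = 1 ∧ m ≤ k + 1 ∧ k ≤ m := by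
    rw [hm]; split_ifs <;> omega
  obtain ⟨hm7, hmo, hmM, hkm⟩ := hmfacts
  have h2n : 2 ∣ n := (mem_all 2 (by omega) (by omega)).1
  have h4n : 4 ∣ n := (mem_all 4 (by omega) (by omega)).1
  have hmn : m ∣ n := (mem_all m (by omega) (by omega)).1
  have hm2n : (m - 2) ∣ n := (mem_all (m - 2) (by omega) (by omega)).1
  have hm4n : (m - 4) ∣ n := (mem_all (m - 4) (by omega) (by omega)).1
  -- coprimality facts
  have gcd_odd : ∀ x y : ℕ, x % 2 = 1 → ¬ 2 ∣ Nat.gcd x y := by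
    intro x y hx hd
    have := hd.trans (Nat.gcd_dvd_left x y)
    omega
  have cop1 : Nat.Coprime m (m - 2) := by
    have h1 : Nat.gcd m (m - 2) ∣ 2 := by
      have := Nat.dvd_sub (Nat.gcd_dvd_left m (m - 2)) (Nat.gcd_dvd_right m (m - 2))
      rwa [show m - (m - 2) = 2 by omega] at this
    exact odd_dvd_four (h1.trans (by norm_num)) (gcd_odd m _ hmo)
  have cop2 : Nat.Coprime m (m - 4) := by
    have h1 : Nat.gcd m (m - 4) ∣ 4 := by
      have := Nat.dvd_sub (Nat.gcd_dvd_left m (m - 4)) (Nat.gcd_dvd_right m (m - 4))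
      rwa [show m - (m - 4) = 4 by omega] at this
    exact odd_dvd_four h1 (gcd_odd m _ hmo)
  have cop3 : Nat.Coprime (m - 2) (m - 4) := by
    have h1 : Nat.gcd (m - 2) (m - 4) ∣ 2 := by
      have := Nat.dvd_sub (Nat.gcd_dvd_left (m - 2) (m - 4)) (Nat.gcd_dvd_right (m - 2) (m - 4))
      rwa [show m - 2 - (m - 4) = 2 by omega] at this
    exact odd_dvd_four (h1.trans (by norm_num)) (gcd_odd (m - 2) _ (by omega))
  have cop4 : ∀ y : ℕ, y % 2 = 1 → Nat.Coprime 4 y := by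
    intro y hy
    exact odd_dvd_four (Nat.gcd_dvd_left 4 y) (fun hd => by
      have := hd.trans (Nat.gcd_dvd_right 4 y); omega)
  have cop2' : ∀ y : ℕ, y % 2 = 1 → Nat.Coprime 2 y := by
    intro y hy
    exact odd_dvd_four ((Nat.gcd_dvd_left 2 y).trans (by norm_num)) (fun hd => by
      have := hd.trans (Nat.gcd_dvd_right 2 y); omega)
  -- upper bound : n ≤ (2m)^2
  have hDd : 2 * m ∣ n := (cop2' m hmo).mul_dvd_of_dvd_of_dvd h2n hmn
  have hup : n ≤ (2 * m) ^ 2 := by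
    by_contra hlt
    push_neg at hlt
    have := hle (2 * m) hDd (by omega) hlt
    omega
  -- lower bound
  have P1 : (m - 2) * (m - 4) ∣ n := cop3.mul_dvd_of_dvd_of_dvd hm2n hm4n
  have P2 : m * ((m - 2) * (m - 4)) ∣ n :=
    (cop1.mul_right cop2).mul_dvd_of_dvd_of_dvd hmn P1
  have P3 : 4 * (m * ((m - 2) * (m - 4))) ∣ n :=
    ((cop4 m hmo).mul_right ((cop4 _ (by omega)).mul_right (cop4 _ (by omega)))).mul_dvd_of_dvd_of_dvd h4n P2
  have hlow : 4 * (m * ((m - 2) * (m - 4))) ≤ n := Nat.le_of_dvd hn P3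
  -- contradiction
  have h1 : 4 * (m * ((m - 2) * (m - 4))) ≤ 4 * (m * m) := by
    calc 4 * (m * ((m - 2) * (m - 4))) ≤ n := hlow
    _ ≤ (2 * m) ^ 2 := hup
    _ = 4 * (m * m) := by ring
  have h2 : (m - 2) * (m - 4) ≤ m :=
    Nat.le_of_mul_le_mul_left (Nat.le_of_mul_le_mul_left h1 (by norm_num)) (by omega)
  obtain ⟨u, hu⟩ : ∃ u, m = u + 7 := ⟨m - 7, by omega⟩
  rw [hu, show u + 7 - 2 = u + 5 by omega, show u + 7 - 4 = u + 3 by omega] at h2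
  nlinarith


lemma key3 (n a k : ℕ) (hn : 0 < n) (ha : 0 < a) (hk : 6 ≤ k)
    (helem : ∀ i, i < k → (3 + i * a) ∣ n ∧ 1 < 3 + i * a ∧ (3 + i * a) ^ 2 < n)
    (hmem : ∀ D, D ∣ n → 1 < D → D ^ 2 < n → ∃ i, i < k ∧ D = 3 + i * a) : False := by
  have h9n : 9 < n := by
    have := (helem 0 (by omega)).2.2
    simpa using this
  have h2n : ¬ 2 ∣ n := by
    intro h2n
    obtain ⟨i, _, hi⟩ := hmem 2 h2n (by omega) (by omega)
    have : 3 ≤ 2 := hi ▸ Nat.le_add_right 3 (i * a)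
    omega
  have ha2 : 2 ∣ a := by
    by_contra h
    have e1 := helem 1 (by omega)
    exact h2n (dvd_trans (by omega : 2 ∣ 3 + 1 * a) e1.1)
  have ha2' : a = 2 := by
    have e3 := helem 3 (by omega)
    have h1d : (1 + a) ∣ n := dvd_trans ⟨3, by ring⟩ e3.1
    have h1sq : (1 + a) ^ 2 < n :=
      lt_of_le_of_lt (Nat.pow_le_pow_left (by omega : 1 + a ≤ 3 + 3 * a) 2) e3.2.2
    obtain ⟨j, hjk, hj⟩ := hmem (1 + a) h1d (by omega) h1sq
    rcases Nat.eq_zero_or_pos j with h0 | h0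
    · subst h0; simp at hj; omega
    · have hle : a ≤ j * a := Nat.le_mul_of_pos_left _ h0
      omega
  subst ha2'
  have mem_all : ∀ t, 3 ≤ t → t % 2 = 1 → t ≤ 2 * k + 1 → t ∣ n ∧ t ^ 2 < n := by
    intro t h3 hodd hM
    have h := helem ((t - 3) / 2) (by omega)
    rw [show 3 + (t - 3) / 2 * 2 = t by omega] at h
    exact ⟨h.1, h.2.2⟩
  have hle : ∀ D, D ∣ n → 1 < D → D ^ 2 < n → D ≤ 2 * k + 1 := by
    intro D h1 h2 h3
    obtain ⟨i, hik, hD⟩ := hmem D h1 h2 h3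
    omega
  set m := if (2 * k + 1) % 3 = 0 then 2 * k - 1 else 2 * k + 1 with hm
  have hmfacts : 11 ≤ m ∧ m % 2 = 1 ∧ m % 3 ≠ 0 ∧ m ≤ 2 * k + 1 ∧ 2 * k - 1 ≤ m := by
    rw [hm]; split_ifs <;> omega
  obtain ⟨hm11, hmo, hm3, hmM, hkm⟩ := hmfacts
  set x := if (m - 2) % 3 = 0 then m - 4 else m - 2 with hx
  have hxfacts : x % 3 ≠ 0 ∧ x % 2 = 1 ∧ m - 4 ≤ x ∧ x ≤ m - 2 ∧ 7 ≤ x := by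
    rw [hx]; split_ifs <;> omega
  obtain ⟨hx3, hxo, hxl, hxu, hx7⟩ := hxfacts
  have hyfacts : (m - 6) % 3 ≠ 0 ∧ (m - 6) % 2 = 1 ∧ 5 ≤ m - 6 := by omega
  obtain ⟨hy3, hyo, hy5⟩ := hyfacts
  -- divisors
  have h3d : 3 ∣ n := by
    have := (helem 0 (by omega)).1
    simpa using this
  have h9d : 9 ∣ n := (mem_all 9 (by omega) (by omega) (by omega)).1
  have hmd : m ∣ n := (mem_all m (by omega) hmo (by omega)).1
  have hxd : x ∣ n := (mem_all x (by omega) hxo (by omega)).1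
  have hyd : (m - 6) ∣ n := (mem_all (m - 6) (by omega) hyo (by omega)).1
  -- coprimality
  have gcd_odd : ∀ u v : ℕ, u % 2 = 1 → ¬ 2 ∣ Nat.gcd u v := by
    intro u v hu hd
    have := hd.trans (Nat.gcd_dvd_left u v)
    omega
  have gcd_n3 : ∀ u v : ℕ, u % 3 ≠ 0 → ¬ 3 ∣ Nat.gcd u v := by
    intro u v hu hd
    have := hd.trans (Nat.gcd_dvd_left u v)
    omega
  have cop9 : ∀ u : ℕ, u % 3 ≠ 0 → Nat.Coprime 9 u := by
    intro u hu
    refine not3_dvd_nine (Nat.gcd_dvd_left 9 u) (fun hd => ?_)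
    have := hd.trans (Nat.gcd_dvd_right 9 u)
    omega
  have cop3' : ∀ u : ℕ, u % 3 ≠ 0 → Nat.Coprime 3 u := by
    intro u hu
    refine not3_dvd_nine ((Nat.gcd_dvd_left 3 u).trans (by norm_num)) (fun hd => ?_)
    have := hd.trans (Nat.gcd_dvd_right 3 u)
    omega
  have copmx : Nat.Coprime m x := by
    have hd4 : (m - x) ∣ 4 := by
      have : m - x = 2 ∨ m - x = 4 := by omega
      rcases this with h | h <;> rw [h] <;> norm_num
    have h1 : Nat.gcd m x ∣ 4 :=
      (Nat.dvd_sub (Nat.gcd_dvd_left m x) (Nat.gcd_dvd_right m x)).trans hd4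
    exact odd_dvd_four h1 (gcd_odd m _ hmo)
  have copmy : Nat.Coprime m (m - 6) := by
    have h1 : Nat.gcd m (m - 6) ∣ 6 := by
      have := Nat.dvd_sub (Nat.gcd_dvd_left m (m - 6)) (Nat.gcd_dvd_right m (m - 6))
      rwa [show m - (m - 6) = 6 by omega] at this
    exact odd_dvd_six h1 (gcd_odd m _ hmo) (gcd_n3 m _ hm3)
  have copxy : Nat.Coprime x (m - 6) := by
    have hd4 : (x - (m - 6)) ∣ 4 := by
      have : x - (m - 6) = 2 ∨ x - (m - 6) = 4 := by omega
      rcases this with h | h <;> rw [h] <;> norm_num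
    have h1 : Nat.gcd x (m - 6) ∣ 4 :=
      (Nat.dvd_sub (Nat.gcd_dvd_left x (m - 6)) (Nat.gcd_dvd_right x (m - 6))).trans hd4
    exact odd_dvd_four h1 (gcd_odd x _ hxo)
  -- upper bound
  have hDd : 3 * m ∣ n := (cop3' m hm3).mul_dvd_of_dvd_of_dvd h3d hmd
  have hup : n ≤ (3 * m) ^ 2 := by
    by_contra hlt
    push_neg at hlt
    have := hle (3 * m) hDd (by omega) hlt
    omega
  -- lower bound
  have P1 : x * (m - 6) ∣ n := copxy.mul_dvd_of_dvd_of_dvd hxd hyd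
  have P2 : m * (x * (m - 6)) ∣ n :=
    (copmx.mul_right copmy).mul_dvd_of_dvd_of_dvd hmd P1
  have P3 : 9 * (m * (x * (m - 6))) ∣ n :=
    ((cop9 m hm3).mul_right ((cop9 x hx3).mul_right (cop9 _ hy3))).mul_dvd_of_dvd_of_dvd h9d P2
  have hlow : 9 * (m * (x * (m - 6))) ≤ n := Nat.le_of_dvd hn P3
  have h1 : 9 * (m * (x * (m - 6))) ≤ 9 * (m * m) := by
    calc 9 * (m * (x * (m - 6))) ≤ n := hlow
    _ ≤ (3 * m) ^ 2 := hup
    _ = 9 * (m * m) := by ring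
  have h2 : x * (m - 6) ≤ m :=
    Nat.le_of_mul_le_mul_left (Nat.le_of_mul_le_mul_left h1 (by norm_num)) (by omega)
  obtain ⟨u, hu⟩ : ∃ u, m = u + 11 := ⟨m - 11, by omega⟩
  have hxl' : u + 7 ≤ x := by omega
  have h4 : m - 6 = u + 5 := by omega
  have h3 : (u + 7) * (u + 5) ≤ x * (m - 6) :=
    Nat.mul_le_mul hxl' (by omega)
  rw [h4, hu] at h2
  rw [h4] at h3
  nlinarith


lemma key5 (n a k : ℕ) (hn : 0 < n) (ha : 0 < a) (hk : 6 ≤ k)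
    (helem : ∀ i, i < k → (5 + i * a) ∣ n ∧ 1 < 5 + i * a ∧ (5 + i * a) ^ 2 < n)
    (hmem : ∀ D, D ∣ n → 1 < D → D ^ 2 < n → ∃ i, i < k ∧ D = 5 + i * a) : False := by
  have hp2n : (5 : ℕ) ^ 2 < n := by
    have := (helem 0 (by omega)).2.2
    simpa using this
  have h3a : 3 ∣ a :=
    cover n 5 a k hn ha helem hmem hp2n 3 (by norm_num) (by omega) (by omega)
  have e5 := helem 5 (by omega)
  have h1d : (1 + a) ∣ n := dvd_trans ⟨5, by ring⟩ e5.1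
  have h1sq : (1 + a) ^ 2 < n :=
    lt_of_le_of_lt (Nat.pow_le_pow_left (by omega : 1 + a ≤ 5 + 5 * a) 2) e5.2.2
  obtain ⟨j, hjk, hj⟩ := hmem (1 + a) h1d (by omega) h1sq
  rcases Nat.eq_zero_or_pos j with h0 | h0
  · subst h0; simp at hj; omega
  · have hle : a ≤ j * a := Nat.le_mul_of_pos_left _ h0
    omega


lemma key7 (n p a k : ℕ) (hn : 0 < n) (ha : 0 < a) (hk : 6 ≤ k)
    (helem : ∀ i, i < k → (p + i * a) ∣ n ∧ 1 < p + i * a ∧ (p + i * a) ^ 2 < n)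
    (hmem : ∀ D, D ∣ n → 1 < D → D ^ 2 < n → ∃ i, i < k ∧ D = p + i * a)
    (hpp : p.Prime) (hp7 : 7 ≤ p) (hpa : ¬ p ∣ a) : False := by
  have hp2n : p ^ 2 < n := by simpa using (helem 0 (by omega)).2.2
  have hpn : p ∣ n := by simpa using (helem 0 (by omega)).1
  have pmin : ∀ D, D ∣ n → 1 < D → D ^ 2 < n → p ≤ D := by
    intro D h1 h2 h3
    obtain ⟨i, _, hD⟩ := hmem D h1 h2 h3
    rw [hD]; exact Nat.le_add_right _ _
  have epos : ∀ i : ℕ, 0 < p + i * a := fun i => by omega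
  -- pairwise coprimality of the six smallest elements
  have cop : ∀ i j : ℕ, i < j → j < 6 → Nat.Coprime (p + i * a) (p + j * a) := by
    intro i j hij hj6
    by_contra hg
    have hg1 : Nat.gcd (p + i * a) (p + j * a) ≠ 1 := hg
    set r := (Nat.gcd (p + i * a) (p + j * a)).minFac with hrdef
    have hr : r.Prime := Nat.minFac_prime hg1
    have hri : r ∣ p + i * a := (Nat.minFac_dvd _).trans (Nat.gcd_dvd_left _ _)
    have hrj : r ∣ p + j * a := (Nat.minFac_dvd _).trans (Nat.gcd_dvd_right _ _)
    have hsub : p + j * a - (p + i * a) = (j - i) * a := by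
      rw [Nat.add_sub_add_left]
      exact (Nat.sub_mul j i a).symm
    have hrd : r ∣ (j - i) * a := by
      have := Nat.dvd_sub hrj hri
      rwa [hsub] at this
    have hrn : r ∣ n := hri.trans (helem i (by omega)).1
    have hple : p ≤ r := by
      refine pmin r hrn hr.one_lt ?_
      have h1 : r ≤ p + i * a := Nat.le_of_dvd (epos i) hri
      exact lt_of_le_of_lt (Nat.pow_le_pow_left h1 2) (helem i (by omega)).2.2
    have hra : r ∣ a := by
      rcases (Nat.Prime.dvd_mul hr).1 hrd with h | h
      · exfalso
        have := Nat.le_of_dvd (by omega) h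
        omega
      · exact h
    have hrp : r ∣ p := by
      have h1 : r ∣ i * a := hra.mul_left i
      have h2 := Nat.dvd_sub hri h1
      rwa [Nat.add_sub_cancel] at h2
    exact hpa (((Nat.prime_dvd_prime_iff_eq hr hpp).1 hrp) ▸ hra)
  have d0 := (helem 0 (by omega)).1
  have d1 := (helem 1 (by omega)).1
  have d2 := (helem 2 (by omega)).1
  have d3 := (helem 3 (by omega)).1
  have d4 := (helem 4 (by omega)).1
  have d5 := (helem 5 (by omega)).1
  have P45 : (p + 4 * a) * (p + 5 * a) ∣ n :=
    (cop 4 5 (by omega) (by omega)).mul_dvd_of_dvd_of_dvd d4 d5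
  have P345 : (p + 3 * a) * ((p + 4 * a) * (p + 5 * a)) ∣ n :=
    ((cop 3 4 (by omega) (by omega)).mul_right (cop 3 5 (by omega) (by omega))).mul_dvd_of_dvd_of_dvd d3 P45
  have P2345 : (p + 2 * a) * ((p + 3 * a) * ((p + 4 * a) * (p + 5 * a))) ∣ n :=
    ((cop 2 3 (by omega) (by omega)).mul_right
      ((cop 2 4 (by omega) (by omega)).mul_right (cop 2 5 (by omega) (by omega)))).mul_dvd_of_dvd_of_dvd d2 P345
  have P12345 : (p + 1 * a) * ((p + 2 * a) * ((p + 3 * a) * ((p + 4 * a) * (p + 5 * a)))) ∣ n :=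
    ((cop 1 2 (by omega) (by omega)).mul_right
      ((cop 1 3 (by omega) (by omega)).mul_right
        ((cop 1 4 (by omega) (by omega)).mul_right (cop 1 5 (by omega) (by omega))))).mul_dvd_of_dvd_of_dvd d1 P2345
  have P012345 : (p + 0 * a) * ((p + 1 * a) * ((p + 2 * a) * ((p + 3 * a) * ((p + 4 * a) * (p + 5 * a))))) ∣ n :=
    ((cop 0 1 (by omega) (by omega)).mul_right
      ((cop 0 2 (by omega) (by omega)).mul_right
        ((cop 0 3 (by omega) (by omega)).mul_right
          ((cop 0 4 (by omega) (by omega)).mul_right (cop 0 5 (by omega) (by omega)))))).mul_dvd_of_dvd_of_dvd d0 P12345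
  -- the key divisor p * (p + a)
  have hcopp : Nat.Coprime p (p + 1 * a) := by
    refine (Nat.Prime.coprime_iff_not_dvd hpp).2 (fun hd => hpa ?_)
    have h1 : p ∣ 1 * a := (Nat.dvd_add_right (dvd_refl p)).1 hd
    simpa using h1
  have hDd : p * (p + 1 * a) ∣ n := hcopp.mul_dvd_of_dvd_of_dvd hpn d1
  by_cases hD : (p * (p + 1 * a)) ^ 2 < n
  · -- p*(p+a) is a small divisor, hence a ∣ p-1 and k ≥ 2p+1
    obtain ⟨j0, hj0k, hj0⟩ := hmem _ hDd (by nlinarith) hD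
    obtain ⟨q, hq⟩ : ∃ q, p = q + 1 := ⟨p - 1, by omega⟩
    have hq6 : 6 ≤ q := by omega
    rw [hq] at hj0
    have h1 : q + 1 ≤ j0 := by nlinarith
    obtain ⟨t, ht⟩ : ∃ t, j0 = (q + 1) + t := ⟨j0 - (q + 1), by omega⟩
    rw [ht] at hj0
    have e2 : t * a = q * (q + 1) := by
      ring_nf at hj0 ⊢
      linarith
    have hdvd : a ∣ q * (q + 1) := ⟨t, by rw [← e2]; ring⟩
    have hcopa : Nat.Coprime a (q + 1) := by
      have h2 := (Nat.Prime.coprime_iff_not_dvd hpp).2 hpa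
      rw [hq] at h2
      exact h2.symm
    have hdq : a ∣ q := hcopa.dvd_of_dvd_mul_right hdvd
    have haq : a ≤ q := Nat.le_of_dvd (by omega) hdq
    have ht2 : q + 1 ≤ t := by
      by_contra hcon
      push_neg at hcon
      have h3 : t * a ≤ q * a := Nat.mul_le_mul (by omega) (le_refl a)
      have h4 : q * a ≤ q * q := Nat.mul_le_mul (le_refl q) haq
      nlinarith
    -- Bertrand
    have hodd : Odd p := hpp.odd_of_ne_two (by omega)
    obtain ⟨s, hs⟩ := hodd
    have hq2s : q = 2 * s := by omega
    obtain ⟨r, hr, hsr, hr2s⟩ := Nat.exists_prime_lt_and_le_two_mul s (by omega)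
    have hra : r ∣ a := cover n p a k hn ha helem hmem hp2n r hr (by omega) (by omega)
    have h2a : 2 ∣ a := cover n p a k hn ha helem hmem hp2n 2 Nat.prime_two (by omega) (by omega)
    have h3a : 3 ∣ a := cover n p a k hn ha helem hmem hp2n 3 Nat.prime_three (by omega) (by omega)
    have hr5 : 5 ≤ r := by
      have h4 : r ≠ 4 := by intro h; rw [h] at hr; norm_num at hr
      omega
    have h6a : 6 ∣ a := Nat.Coprime.mul_dvd_of_dvd_of_dvd (by norm_num) h2a h3a
    have hc6r : Nat.Coprime 6 r := by
      have hnd : ¬ r ∣ 6 := by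
        intro hd
        have h5 := Nat.le_of_dvd (by norm_num) hd
        interval_cases r
        · norm_num at hd
        · norm_num at hr
      exact Nat.coprime_comm.1 ((Nat.Prime.coprime_iff_not_dvd hr).2 hnd)
    have h6ra : 6 * r ∣ a := hc6r.mul_dvd_of_dvd_of_dvd h6a hra
    have hfin : 6 * r ≤ a := Nat.le_of_dvd ha h6ra
    omega
  · -- n is at most (p*(p+a))^2, contradicting the big product
    push_neg at hD
    have h23 : p * (p + 1 * a) < (p + 2 * a) * (p + 3 * a) := by nlinarith
    have h45 : 0 < (p + 4 * a) * (p + 5 * a) := by positivity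
    have hXpos : 0 < p * (p + 1 * a) := by positivity
    have hbig : (p * (p + 1 * a)) ^ 2
        < (p + 0 * a) * ((p + 1 * a) * ((p + 2 * a) * ((p + 3 * a) * ((p + 4 * a) * (p + 5 * a))))) := by
      calc (p * (p + 1 * a)) ^ 2 = (p * (p + 1 * a)) * (p * (p + 1 * a)) := by ring
        _ < (p * (p + 1 * a)) * ((p + 2 * a) * (p + 3 * a)) :=
            mul_lt_mul_of_pos_left h23 hXpos
        _ ≤ (p * (p + 1 * a)) * ((p + 2 * a) * (p + 3 * a)) * ((p + 4 * a) * (p + 5 * a)) :=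
            Nat.le_mul_of_pos_right _ h45
        _ = (p + 0 * a) * ((p + 1 * a) * ((p + 2 * a) * ((p + 3 * a) * ((p + 4 * a) * (p + 5 * a))))) := by
            ring
    have hlow := Nat.le_of_dvd hn P012345
    linarith

lemma key (n p a k : ℕ) (hn : 0 < n) (ha : 0 < a) (hk : 6 ≤ k)
    (helem : ∀ i, i < k → (p + i * a) ∣ n ∧ 1 < p + i * a ∧ (p + i * a) ^ 2 < n)
    (hmem : ∀ D, D ∣ n → 1 < D → D ^ 2 < n → ∃ i, i < k ∧ D = p + i * a) : False := by
  have hp1 : 1 < p := by simpa using (helem 0 (by omega)).2.1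
  have hpn : p ∣ n := by simpa using (helem 0 (by omega)).1
  have hp2n : p ^ 2 < n := by simpa using (helem 0 (by omega)).2.2
  have hn4 : 4 < n := by nlinarith
  have pmin : ∀ D, D ∣ n → 1 < D → D ^ 2 < n → p ≤ D := by
    intro D h1 h2 h3
    obtain ⟨i, _, hD⟩ := hmem D h1 h2 h3
    rw [hD]; exact Nat.le_add_right _ _
  have hpp : p.Prime := by
    have hne1 : n ≠ 1 := by omega
    have hf := Nat.minFac_prime hne1
    have hfle : n.minFac ≤ p := Nat.minFac_le_of_dvd hp1 hpn
    have hple : p ≤ n.minFac :=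
      pmin _ (Nat.minFac_dvd n) hf.one_lt
        (lt_of_le_of_lt (Nat.pow_le_pow_left hfle 2) hp2n)
    have : p = n.minFac := le_antisymm hple hfle
    rwa [this]
  have hpa : ¬ p ∣ a := pnotdvda n p a k hn ha hk hp1 helem hmem
  rcases eq_or_ne p 2 with h2 | h2
  · subst h2; exact key2 n a k hn ha hk helem hmem hpa
  rcases eq_or_ne p 3 with h3 | h3
  · subst h3; exact key3 n a k hn ha hk helem hmem
  rcases eq_or_ne p 5 with h5 | h5
  · subst h5; exact key5 n a k hn ha hk helem hmem
  have hp7 : 7 ≤ p := by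
    by_contra hcon
    push_neg at hcon
    interval_cases p
    · exact h2 rfl
    · exact h3 rfl
    · exact absurd hpp (by norm_num)
    · exact h5 rfl
    · exact absurd hpp (by norm_num)
  exact key7 n p a k hn ha hk helem hmem hpp hp7 hpa

theorem statement_0 (n : ℕ) (hn : 0 < n) (h : IsAP (A n)) : (A n).card ≤ 5 := by
  by_contra hcard
  push_neg at hcard
  obtain ⟨p, a, hp0, ha0, hA⟩ := h
  set k := (A n).card with hkdef
  have hk : 6 ≤ k := hcard
  have memA : ∀ D : ℕ, D ∈ A n ↔ D ∣ n ∧ 1 < D ∧ D ^ 2 < n := by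
    intro D
    simp [A, Nat.mem_divisors, hn.ne', and_assoc]
  have helem : ∀ i, i < k → (p + i * a) ∣ n ∧ 1 < p + i * a ∧ (p + i * a) ^ 2 < n := by
    intro i hi
    have : p + i * a ∈ A n := by
      rw [hA]
      exact Finset.mem_image.2 ⟨i, Finset.mem_range.2 hi, rfl⟩
    exact (memA _).1 this
  have hmem : ∀ D, D ∣ n → 1 < D → D ^ 2 < n → ∃ i, i < k ∧ D = p + i * a := by
    intro D h1 h2 h3
    have hD : D ∈ A n := (memA D).2 ⟨h1, h2, h3⟩
    rw [hA] at hD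
    obtain ⟨i, hi, hiD⟩ := Finset.mem_image.1 hD
    exact ⟨i, Finset.mem_range.1 hi, hiD.symm⟩
  exact key n p a k hn ha0 hk helem hmem
end

section
/- Let n be a positive integer. If A_n = {2, 3, 4, ..., k + 1} for some positive integer k (an arithmetic progression with first term 2 and common difference 1), then k ≤ 5. Likewise, if A_n = {3, 5, 7, ..., 2k + 1} for some positive integer k (an arithmetic progression with first term 3 and common difference 2), then k ≤ 5. -/
lemma memA {n : ℕ} (hn : 0 < n) (m : ℕ) :
    m ∈ A n ↔ m ∣ n ∧ 1 < m ∧ m ^ 2 < n := by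
  simp [A, Nat.mem_divisors, hn.ne']

lemma pow_facts (p t : ℕ) (hp : 2 ≤ p) (hpt : p ≤ t) :
    p ≤ p ^ Nat.log p t ∧ p ^ Nat.log p t ≤ t ∧ t < p * p ^ Nat.log p t := by
  have h0 : t ≠ 0 := by omega
  have h1 : p ^ Nat.log p t ≤ t := Nat.pow_log_le_self p h0
  have h2 : t < p ^ (Nat.log p t + 1) := Nat.lt_pow_succ_log_self (by omega) t
  have h3 : 0 < Nat.log p t := Nat.log_pos (by omega) hpt
  have h4 : p ^ 1 ≤ p ^ Nat.log p t := Nat.pow_le_pow_right (by omega) h3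
  rw [pow_succ, mul_comm] at h2
  constructor
  · simpa using h4
  · exact ⟨h1, by omega⟩

set_option maxHeartbeats 1600000 in
lemma case_one (n : ℕ) (hn : 0 < n) (k : ℕ)
    (hA : A n = (Finset.range k).image (fun i => 2 + i * 1)) : k ≤ 5 := by
  by_contra hcon
  push_neg at hcon
  have hk6 : 6 ≤ k := hcon
  have key : ∀ m : ℕ, 2 ≤ m → m ≤ k + 1 → m ∣ n ∧ m ^ 2 < n := by
    intro m h2 h3
    have hm : m ∈ A n := by
      rw [hA, Finset.mem_image]
      exact ⟨m - 2, Finset.mem_range.mpr (by omega), by omega⟩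
    rw [memA hn] at hm
    exact ⟨hm.1, hm.2.2⟩
  have key2 : ∀ m : ℕ, m ∣ n → 1 < m → m ^ 2 < n → m ≤ k + 1 := by
    intro m h1 h2 h3
    have hm : m ∈ A n := (memA hn m).mpr ⟨h1, h2, h3⟩
    rw [hA, Finset.mem_image] at hm
    obtain ⟨i, hi, rfl⟩ := hm
    have := Finset.mem_range.mp hi
    omega
  -- upper bound on n
  obtain ⟨p, hp1, hp2, hp3⟩ : ∃ p, k ≤ p ∧ p ≤ k + 1 ∧ p % 2 = 1 :=
    ⟨2 * (k / 2) + 1, by omega, by omega, by omega⟩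
  obtain ⟨hpd, hps⟩ := key p (by omega) (by omega)
  obtain ⟨h2d, -⟩ := key 2 le_rfl (by omega)
  have hcop : Nat.Coprime 2 p :=
    (Nat.Prime.coprime_iff_not_dvd Nat.prime_two).mpr (by omega)
  have h2p : 2 * p ∣ n := hcop.mul_dvd_of_dvd_of_dvd h2d hpd
  have hub : n ≤ (2 * p) ^ 2 := by
    by_contra hc
    push_neg at hc
    have := key2 (2 * p) h2p (by omega) hc
    omega
  have hub2 : n ≤ 4 * (k + 1) ^ 2 := by nlinarith
  -- lower bound on n via prime powers
  have f2 := pow_facts 2 (k + 1) (by omega) (by omega)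
  have f3 := pow_facts 3 (k + 1) (by omega) (by omega)
  have f5 := pow_facts 5 (k + 1) (by omega) (by omega)
  have f7 := pow_facts 7 (k + 1) (by omega) (by omega)
  set a := Nat.log 2 (k + 1) with ha
  set b := Nat.log 3 (k + 1) with hb
  set c := Nat.log 5 (k + 1) with hc
  set d := Nat.log 7 (k + 1) with hd
  have d2 : 2 ^ a ∣ n := (key _ (by omega) f2.2.1).1
  have d3 : 3 ^ b ∣ n := (key _ (by omega) f3.2.1).1
  have d5 : 5 ^ c ∣ n := (key _ (by omega) f5.2.1).1
  have d7 : 7 ^ d ∣ n := (key _ (by omega) f7.2.1).1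
  have c23 : Nat.Coprime (2 ^ a) (3 ^ b) := Nat.Coprime.pow a b (by decide)
  have c235 : Nat.Coprime (2 ^ a * 3 ^ b) (5 ^ c) :=
    Nat.Coprime.mul (Nat.Coprime.pow a c (by decide)) (Nat.Coprime.pow b c (by decide))
  have c2357 : Nat.Coprime (2 ^ a * 3 ^ b * 5 ^ c) (7 ^ d) :=
    Nat.Coprime.mul (Nat.Coprime.mul (Nat.Coprime.pow a d (by decide))
      (Nat.Coprime.pow b d (by decide))) (Nat.Coprime.pow c d (by decide))
  have dP : 2 ^ a * 3 ^ b * 5 ^ c * 7 ^ d ∣ n :=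
    c2357.mul_dvd_of_dvd_of_dvd
      (c235.mul_dvd_of_dvd_of_dvd (c23.mul_dvd_of_dvd_of_dvd d2 d3) d5) d7
  have hPn : 2 ^ a * 3 ^ b * 5 ^ c * 7 ^ d ≤ n := Nat.le_of_dvd hn dP
  have m1 : (k + 1) * (k + 1) < (2 * 2 ^ a) * (3 * 3 ^ b) :=
    Nat.mul_lt_mul'' f2.2.2 f3.2.2
  have m2 : (k + 1) * (k + 1) < (5 * 5 ^ c) * (7 * 7 ^ d) :=
    Nat.mul_lt_mul'' f5.2.2 f7.2.2
  have m3 : (k + 1) ^ 4 < 210 * (2 ^ a * 3 ^ b * 5 ^ c * 7 ^ d) := by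
    calc (k + 1) ^ 4 = ((k + 1) * (k + 1)) * ((k + 1) * (k + 1)) := by ring
      _ < ((2 * 2 ^ a) * (3 * 3 ^ b)) * ((5 * 5 ^ c) * (7 * 7 ^ d)) :=
          Nat.mul_lt_mul'' m1 m2
      _ = 210 * (2 ^ a * 3 ^ b * 5 ^ c * 7 ^ d) := by ring
  have m4 : (k + 1) ^ 4 < 840 * (k + 1) ^ 2 := by nlinarith
  have hk27 : k ≤ 27 := by
    by_contra hc
    push_neg at hc
    have h29 : 29 ≤ k + 1 := by omega
    have := Nat.pow_le_pow_left h29 2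
    nlinarith
  -- finite cases
  by_cases h15 : 15 ≤ k
  · have d16 := (key 16 (by omega) (by omega)).1
    have d9 := (key 9 (by omega) (by omega)).1
    have d5' := (key 5 (by omega) (by omega)).1
    have d7' := (key 7 (by omega) (by omega)).1
    have h144 : (144 : ℕ) ∣ n := by
      have h := Nat.Coprime.mul_dvd_of_dvd_of_dvd (show Nat.Coprime 16 9 by norm_num) d16 d9
      norm_num at h
      exact h
    have h720 : (720 : ℕ) ∣ n := by
      have h := Nat.Coprime.mul_dvd_of_dvd_of_dvd (show Nat.Coprime 144 5 by norm_num) h144 d5'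
      norm_num at h
      exact h
    have h5040 : (5040 : ℕ) ∣ n := by
      have h := Nat.Coprime.mul_dvd_of_dvd_of_dvd (show Nat.Coprime 720 7 by norm_num) h720 d7'
      norm_num at h
      exact h
    have hge := Nat.le_of_dvd hn h5040
    have hsq : (k + 1) ^ 2 ≤ 784 := by
      have := Nat.pow_le_pow_left (show k + 1 ≤ 28 by omega) 2
      norm_num at this
      exact this
    linarith
  · by_cases h8 : 8 ≤ k
    · have d8 := (key 8 (by omega) (by omega)).1
      have d9 := (key 9 (by omega) (by omega)).1
      have d5' := (key 5 (by omega) (by omega)).1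
      have d7' := (key 7 (by omega) (by omega)).1
      have h72 : (72 : ℕ) ∣ n := by
        have h := Nat.Coprime.mul_dvd_of_dvd_of_dvd (show Nat.Coprime 8 9 by norm_num) d8 d9
        norm_num at h
        exact h
      have h360 : (360 : ℕ) ∣ n := by
        have h := Nat.Coprime.mul_dvd_of_dvd_of_dvd (show Nat.Coprime 72 5 by norm_num) h72 d5'
        norm_num at h
        exact h
      have h2520 : (2520 : ℕ) ∣ n := by
        have h := Nat.Coprime.mul_dvd_of_dvd_of_dvd (show Nat.Coprime 360 7 by norm_num) h360 d7'
        norm_num at h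
        exact h
      have hge := Nat.le_of_dvd hn h2520
      have hsq : (k + 1) ^ 2 ≤ 225 := by
        have := Nat.pow_le_pow_left (show k + 1 ≤ 15 by omega) 2
        norm_num at this
        exact this
      linarith
    · have d4 := (key 4 (by omega) (by omega)).1
      have d3' := (key 3 (by omega) (by omega)).1
      have d5' := (key 5 (by omega) (by omega)).1
      have d7' := (key 7 (by omega) (by omega)).1
      have h12 : (12 : ℕ) ∣ n := by
        have h := Nat.Coprime.mul_dvd_of_dvd_of_dvd (show Nat.Coprime 4 3 by norm_num) d4 d3'
        norm_num at h
        exact h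
      have h60 : (60 : ℕ) ∣ n := by
        have h := Nat.Coprime.mul_dvd_of_dvd_of_dvd (show Nat.Coprime 12 5 by norm_num) h12 d5'
        norm_num at h
        exact h
      have h420 : (420 : ℕ) ∣ n := by
        have h := Nat.Coprime.mul_dvd_of_dvd_of_dvd (show Nat.Coprime 60 7 by norm_num) h60 d7'
        norm_num at h
        exact h
      have hge := Nat.le_of_dvd hn h420
      have hsq : (k + 1) ^ 2 ≤ 64 := by
        have := Nat.pow_le_pow_left (show k + 1 ≤ 8 by omega) 2
        norm_num at this
        exact this
      linarith

set_option maxHeartbeats 1600000 in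
lemma case_two (n : ℕ) (hn : 0 < n) (k : ℕ)
    (hA : A n = (Finset.range k).image (fun i => 3 + i * 2)) : k ≤ 5 := by
  by_contra hcon
  push_neg at hcon
  have hk6 : 6 ≤ k := hcon
  have key : ∀ m : ℕ, m % 2 = 1 → 3 ≤ m → m ≤ 2 * k + 1 → m ∣ n ∧ m ^ 2 < n := by
    intro m h0 h2 h3
    have hm : m ∈ A n := by
      rw [hA, Finset.mem_image]
      exact ⟨(m - 3) / 2, Finset.mem_range.mpr (by omega), by omega⟩
    rw [memA hn] at hm
    exact ⟨hm.1, hm.2.2⟩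
  have key2 : ∀ m : ℕ, m ∣ n → 1 < m → m ^ 2 < n → m ≤ 2 * k + 1 := by
    intro m h1 h2 h3
    have hm : m ∈ A n := (memA hn m).mpr ⟨h1, h2, h3⟩
    rw [hA, Finset.mem_image] at hm
    obtain ⟨i, hi, rfl⟩ := hm
    have := Finset.mem_range.mp hi
    omega
  -- upper bound on n
  obtain ⟨p, hp0, hp1, hp2, hp3⟩ :
      ∃ p, p % 2 = 1 ∧ 2 * k - 1 ≤ p ∧ p ≤ 2 * k + 1 ∧ ¬ (3 ∣ p) := by
    by_cases h3 : (2 * k + 1) % 3 = 0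
    · exact ⟨2 * k - 1, by omega, by omega, by omega, by omega⟩
    · exact ⟨2 * k + 1, by omega, by omega, by omega, by omega⟩
  obtain ⟨hpd, hps⟩ := key p hp0 (by omega) hp2
  obtain ⟨h3d, -⟩ := key 3 (by omega) le_rfl (by omega)
  have hcop : Nat.Coprime 3 p :=
    (Nat.Prime.coprime_iff_not_dvd Nat.prime_three).mpr hp3
  have h3p : 3 * p ∣ n := hcop.mul_dvd_of_dvd_of_dvd h3d hpd
  have hub : n ≤ (3 * p) ^ 2 := by
    by_contra hc
    push_neg at hc
    have := key2 (3 * p) h3p (by omega) hc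
    omega
  have hub2 : n ≤ 9 * (2 * k + 1) ^ 2 := by
    calc n ≤ (3 * p) ^ 2 := hub
      _ ≤ (3 * (2 * k + 1)) ^ 2 := Nat.pow_le_pow_left (by omega) 2
      _ = 9 * (2 * k + 1) ^ 2 := by ring
  -- lower bound on n via odd prime powers
  have f3 := pow_facts 3 (2 * k + 1) (by omega) (by omega)
  have f5 := pow_facts 5 (2 * k + 1) (by omega) (by omega)
  have f7 := pow_facts 7 (2 * k + 1) (by omega) (by omega)
  have f11 := pow_facts 11 (2 * k + 1) (by omega) (by omega)
  have f13 := pow_facts 13 (2 * k + 1) (by omega) (by omega)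
  set b := Nat.log 3 (2 * k + 1) with hb
  set c := Nat.log 5 (2 * k + 1) with hc
  set d := Nat.log 7 (2 * k + 1) with hd
  set e := Nat.log 11 (2 * k + 1) with he
  set f := Nat.log 13 (2 * k + 1) with hf
  have o3 : (3 : ℕ) ^ b % 2 = 1 := Nat.odd_iff.mp (Odd.pow (by decide))
  have o5 : (5 : ℕ) ^ c % 2 = 1 := Nat.odd_iff.mp (Odd.pow (by decide))
  have o7 : (7 : ℕ) ^ d % 2 = 1 := Nat.odd_iff.mp (Odd.pow (by decide))
  have o11 : (11 : ℕ) ^ e % 2 = 1 := Nat.odd_iff.mp (Odd.pow (by decide))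
  have o13 : (13 : ℕ) ^ f % 2 = 1 := Nat.odd_iff.mp (Odd.pow (by decide))
  have d3 : 3 ^ b ∣ n := (key _ o3 (by omega) f3.2.1).1
  have d5 : 5 ^ c ∣ n := (key _ o5 (by omega) f5.2.1).1
  have d7 : 7 ^ d ∣ n := (key _ o7 (by omega) f7.2.1).1
  have d11 : 11 ^ e ∣ n := (key _ o11 (by omega) f11.2.1).1
  have d13 : 13 ^ f ∣ n := (key _ o13 (by omega) f13.2.1).1
  have c35 : Nat.Coprime (3 ^ b) (5 ^ c) := Nat.Coprime.pow b c (by decide)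
  have c357 : Nat.Coprime (3 ^ b * 5 ^ c) (7 ^ d) :=
    Nat.Coprime.mul (Nat.Coprime.pow b d (by decide)) (Nat.Coprime.pow c d (by decide))
  have c3571 : Nat.Coprime (3 ^ b * 5 ^ c * 7 ^ d) (11 ^ e) :=
    Nat.Coprime.mul (Nat.Coprime.mul (Nat.Coprime.pow b e (by decide))
      (Nat.Coprime.pow c e (by decide))) (Nat.Coprime.pow d e (by decide))
  have c35713 : Nat.Coprime (3 ^ b * 5 ^ c * 7 ^ d * 11 ^ e) (13 ^ f) :=
    Nat.Coprime.mul (Nat.Coprime.mul (Nat.Coprime.mul (Nat.Coprime.pow b f (by decide))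
      (Nat.Coprime.pow c f (by decide))) (Nat.Coprime.pow d f (by decide)))
      (Nat.Coprime.pow e f (by decide))
  have dP : 3 ^ b * 5 ^ c * 7 ^ d * 11 ^ e * 13 ^ f ∣ n :=
    c35713.mul_dvd_of_dvd_of_dvd
      (c3571.mul_dvd_of_dvd_of_dvd
        (c357.mul_dvd_of_dvd_of_dvd (c35.mul_dvd_of_dvd_of_dvd d3 d5) d7) d11) d13
  have hPn : 3 ^ b * 5 ^ c * 7 ^ d * 11 ^ e * 13 ^ f ≤ n := Nat.le_of_dvd hn dP
  have m1 : (2 * k + 1) * (2 * k + 1) < (3 * 3 ^ b) * (5 * 5 ^ c) :=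
    Nat.mul_lt_mul'' f3.2.2 f5.2.2
  have m2 : (2 * k + 1) * (2 * k + 1) < (7 * 7 ^ d) * (11 * 11 ^ e) :=
    Nat.mul_lt_mul'' f7.2.2 f11.2.2
  have m12 : ((2 * k + 1) * (2 * k + 1)) * ((2 * k + 1) * (2 * k + 1)) <
      ((3 * 3 ^ b) * (5 * 5 ^ c)) * ((7 * 7 ^ d) * (11 * 11 ^ e)) :=
    Nat.mul_lt_mul'' m1 m2
  have m3 : (2 * k + 1) ^ 5 < 15015 * (3 ^ b * 5 ^ c * 7 ^ d * 11 ^ e * 13 ^ f) := by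
    calc (2 * k + 1) ^ 5
        = (((2 * k + 1) * (2 * k + 1)) * ((2 * k + 1) * (2 * k + 1))) * (2 * k + 1) := by
          ring
      _ < (((3 * 3 ^ b) * (5 * 5 ^ c)) * ((7 * 7 ^ d) * (11 * 11 ^ e))) * (13 * 13 ^ f) :=
          Nat.mul_lt_mul'' m12 f13.2.2
      _ = 15015 * (3 ^ b * 5 ^ c * 7 ^ d * 11 ^ e * 13 ^ f) := by ring
  have m4 : (2 * k + 1) ^ 5 < 135135 * (2 * k + 1) ^ 2 := by
    calc (2 * k + 1) ^ 5 < 15015 * (3 ^ b * 5 ^ c * 7 ^ d * 11 ^ e * 13 ^ f) := m3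
      _ ≤ 15015 * n := Nat.mul_le_mul_left 15015 hPn
      _ ≤ 15015 * (9 * (2 * k + 1) ^ 2) := Nat.mul_le_mul_left 15015 hub2
      _ = 135135 * (2 * k + 1) ^ 2 := by ring
  have hk25 : k ≤ 25 := by
    by_contra hcc
    push_neg at hcc
    have h53 : 53 ≤ 2 * k + 1 := by omega
    have h3' : 148877 * (2 * k + 1) ^ 2 ≤ (2 * k + 1) ^ 5 := by
      calc 148877 * (2 * k + 1) ^ 2 = 53 ^ 3 * (2 * k + 1) ^ 2 := by norm_num
        _ ≤ (2 * k + 1) ^ 3 * (2 * k + 1) ^ 2 :=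
            Nat.mul_le_mul_right _ (Nat.pow_le_pow_left h53 3)
        _ = (2 * k + 1) ^ 5 := by ring
    have hlt : 148877 * (2 * k + 1) ^ 2 < 135135 * (2 * k + 1) ^ 2 :=
      lt_of_le_of_lt h3' m4
    have hs : 0 < (2 * k + 1) ^ 2 := by positivity
    have := Nat.lt_of_mul_lt_mul_right (a := (2 * k + 1) ^ 2) hlt
    omega
  -- finite case : 6 ≤ k ≤ 25
  have d9 := (key 9 (by omega) (by omega) (by omega)).1
  have d5' := (key 5 (by omega) (by omega) (by omega)).1
  have d7' := (key 7 (by omega) (by omega) (by omega)).1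
  have d11' := (key 11 (by omega) (by omega) (by omega)).1
  have d13' := (key 13 (by omega) (by omega) (by omega)).1
  have h45 : (45 : ℕ) ∣ n := by
    have h := Nat.Coprime.mul_dvd_of_dvd_of_dvd (show Nat.Coprime 9 5 by norm_num) d9 d5'
    norm_num at h
    exact h
  have h315 : (315 : ℕ) ∣ n := by
    have h := Nat.Coprime.mul_dvd_of_dvd_of_dvd (show Nat.Coprime 45 7 by norm_num) h45 d7'
    norm_num at h
    exact h
  have h3465 : (3465 : ℕ) ∣ n := by
    have h := Nat.Coprime.mul_dvd_of_dvd_of_dvd (show Nat.Coprime 315 11 by norm_num) h315 d11'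
    norm_num at h
    exact h
  have h45045 : (45045 : ℕ) ∣ n := by
    have h := Nat.Coprime.mul_dvd_of_dvd_of_dvd (show Nat.Coprime 3465 13 by norm_num) h3465 d13'
    norm_num at h
    exact h
  have hge := Nat.le_of_dvd hn h45045
  have hsq : (2 * k + 1) ^ 2 ≤ 2601 := by
    have := Nat.pow_le_pow_left (show 2 * k + 1 ≤ 51 by omega) 2
    norm_num at this
    exact this
  have hfin : n ≤ 23409 := by
    calc n ≤ 9 * (2 * k + 1) ^ 2 := hub2
      _ ≤ 9 * 2601 := Nat.mul_le_mul_left 9 hsq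
      _ = 23409 := by norm_num
  exact absurd (le_trans hge hfin) (by norm_num)


theorem statement_4 (n : ℕ) (hn : 0 < n) (k : ℕ) (hk : 0 < k) :
    (A n = (Finset.range k).image (fun i => 2 + i * 1) → k ≤ 5) ∧
    (A n = (Finset.range k).image (fun i => 3 + i * 2) → k ≤ 5) :=
  ⟨fun h => case_one n hn k h, fun h => case_two n hn k h⟩
end

section
/- Let n be a positive integer and suppose A_n = {d + i·a : 0 ≤ i ≤ k − 1} for some positive integers d, a, k with k ≥ 2 (so A_n is an arithmetic progression with k terms and common difference a). If a = 1 or a = 2, then k ≤ 5. -/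
lemma eq_one_of_dvd_four {g : ℕ} (h : g ∣ 4) (h2 : ¬ 2 ∣ g) : g = 1 := by
  have hle := Nat.le_of_dvd (by norm_num) h
  interval_cases g <;> revert h h2 <;> decide

lemma cop_small {x y : ℕ} (hx : x % 2 = 1) (h : Nat.gcd x y ∣ 4) : Nat.Coprime x y := by
  refine eq_one_of_dvd_four h fun h2 => ?_
  have := h2.trans (Nat.gcd_dvd_left x y)
  omega

lemma cop_gap {x y c : ℕ} (hx : x % 2 = 1) (hxy : x - y = c) (hc : c ∣ 4) : Nat.Coprime x y :=
  cop_small hx (by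
    have : Nat.gcd x y ∣ x - y := Nat.dvd_sub (Nat.gcd_dvd_left x y) (Nat.gcd_dvd_right x y)
    rw [hxy] at this; exact this.trans hc)

lemma cop_succ (m : ℕ) : Nat.Coprime (m+1) m := by
  have h : Nat.gcd (m+1) m ∣ (m+1) - m := Nat.dvd_sub (Nat.gcd_dvd_left _ _) (Nat.gcd_dvd_right _ _)
  have h1 : (m+1) - m = 1 := by omega
  rw [h1] at h
  exact Nat.dvd_one.mp h



set_option maxHeartbeats 1600000 in
theorem statement_5 (n : ℕ) (hn : 0 < n) (d a k : ℕ) (hd : 0 < d) (ha : 0 < a)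
    (hk : 2 ≤ k) (hA : A n = (Finset.range k).image (fun i => d + i * a))
    (haval : a = 1 ∨ a = 2) : k ≤ 5 := by
  by_contra hk5
  push_neg at hk5
  have hk6 : 6 ≤ k := hk5
  have hmem : ∀ x : ℕ, (x ∣ n ∧ 1 < x ∧ x ^ 2 < n) ↔ ∃ i, i < k ∧ d + i * a = x := by
    intro x
    have h1 : x ∈ A n ↔ (x ∣ n ∧ 1 < x ∧ x ^ 2 < n) := by
      simp [A, Finset.mem_filter, Nat.mem_divisors, hn.ne', and_assoc]
    have h2 : x ∈ A n ↔ ∃ i, i < k ∧ d + i * a = x := by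
      rw [hA]; simp [Finset.mem_image, Finset.mem_range]
    rw [← h1, h2]
  rcases haval with rfl | rfl
  · -- a = 1
    obtain ⟨hd_dvd, hd1, _⟩ := (hmem d).mpr ⟨0, by omega, by ring⟩
    obtain ⟨hd1_dvd, _, hd1sq⟩ := (hmem (d+1)).mpr ⟨1, by omega, by ring⟩
    have h2n : 2 ∣ n := by
      rcases (by omega : 2 ∣ d ∨ 2 ∣ (d+1)) with h | h
      · exact h.trans hd_dvd
      · exact h.trans hd1_dvd
    obtain ⟨i0, hi0, hi0e⟩ := (hmem 2).mp ⟨h2n, by norm_num, by nlinarith⟩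
    have hd2 : d = 2 := by omega
    subst hd2
    have hall : ∀ m, 2 ≤ m → m ≤ k + 1 → m ∣ n ∧ m ^ 2 < n := by
      intro m h2 hle
      obtain ⟨hh1, _, hh3⟩ := (hmem m).mpr ⟨m - 2, by omega, by omega⟩
      exact ⟨hh1, hh3⟩
    obtain ⟨t, rfl⟩ : ∃ t, k = t + 6 := ⟨k - 6, by omega⟩
    rcases (by omega : t % 2 = 0 ∨ t % 2 = 1) with ht | ht
    · -- M = t+7 odd
      obtain ⟨hM, _⟩ := hall (t+7) (by omega) (by omega)
      obtain ⟨hM1, _⟩ := hall (t+6) (by omega) (by omega)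
      obtain ⟨hM2, _⟩ := hall (t+5) (by omega) (by omega)
      have c1 : Nat.Coprime (t+7) (t+6) := cop_succ (t+6)
      have c2 : Nat.Coprime (t+6) (t+5) := cop_succ (t+5)
      have c3 : Nat.Coprime (t+7) (t+5) := cop_gap (c := 2) (by omega) (by omega) (by norm_num)
      have hP : (t+7) * (t+6) * (t+5) ∣ n :=
        (Nat.Coprime.mul c3 c2).symm.symm.mul_dvd_of_dvd_of_dvd
          (c1.mul_dvd_of_dvd_of_dvd hM hM1) hM2
      have hPle := Nat.le_of_dvd hn hP
      have cx : Nat.Coprime (t+7) 2 := cop_small (by omega) ((Nat.gcd_dvd_right _ _).trans (by norm_num))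
      have hx_dvd : 2 * (t+7) ∣ n := cx.symm.mul_dvd_of_dvd_of_dvd h2n hM
      have hxsq : (2 * (t+7)) ^ 2 < n := by nlinarith
      obtain ⟨i, hi, hie⟩ := (hmem (2*(t+7))).mp ⟨hx_dvd, by omega, hxsq⟩
      omega
    · -- M = t+7 even, use t+6,t+5,t+4 and x = 2(t+6)
      obtain ⟨hM1, _⟩ := hall (t+6) (by omega) (by omega)
      obtain ⟨hM2, _⟩ := hall (t+5) (by omega) (by omega)
      obtain ⟨hM3, _⟩ := hall (t+4) (by omega) (by omega)
      have c1 : Nat.Coprime (t+6) (t+5) := cop_succ (t+5)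
      have c2 : Nat.Coprime (t+5) (t+4) := cop_succ (t+4)
      have c3 : Nat.Coprime (t+6) (t+4) := cop_gap (c := 2) (by omega) (by omega) (by norm_num)
      have hP : (t+6) * (t+5) * (t+4) ∣ n :=
        (Nat.Coprime.mul c3 c2.symm.symm).mul_dvd_of_dvd_of_dvd
          (c1.mul_dvd_of_dvd_of_dvd hM1 hM2) hM3
      have hPle := Nat.le_of_dvd hn hP
      have cx : Nat.Coprime (t+6) 2 := cop_small (by omega) ((Nat.gcd_dvd_right _ _).trans (by norm_num))
      have hx_dvd : 2 * (t+6) ∣ n := cx.symm.mul_dvd_of_dvd_of_dvd h2n hM1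
      have ht1 : 1 ≤ t := by omega
      have h4 : 4*(t+6) < (t+5)*(t+4) := by nlinarith
      have hxsq : (2 * (t+6)) ^ 2 < n := by nlinarith [h4, show 0 < t+6 by omega]
      obtain ⟨i, hi, hie⟩ := (hmem (2*(t+6))).mp ⟨hx_dvd, by omega, hxsq⟩
      omega
  · -- a = 2
    obtain ⟨hd_dvd, hd1, _⟩ := (hmem d).mpr ⟨0, by omega, by ring⟩
    obtain ⟨hd2_dvd, _, hd2sq⟩ := (hmem (d+1*2)).mpr ⟨1, by omega, rfl⟩
    obtain ⟨hd4_dvd, _, hd4sq⟩ := (hmem (d+2*2)).mpr ⟨2, by omega, rfl⟩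
    rcases (by omega : d % 2 = 0 ∨ d % 2 = 1) with hpar | hpar
    · -- d even: d = 2, then 3 ∣ n gives parity contradiction
      have h2n : 2 ∣ n := (by omega : 2 ∣ d).trans hd_dvd
      obtain ⟨i0, hi0, hi0e⟩ := (hmem 2).mp ⟨h2n, by norm_num, by nlinarith⟩
      have hd2 : d = 2 := by omega
      subst hd2
      have h3n : 3 ∣ n := (by norm_num : (3:ℕ) ∣ 2 + 2*2).trans hd4_dvd
      have h3sq : (3:ℕ) ^ 2 < n := by nlinarith
      obtain ⟨i, hi, hie⟩ := (hmem 3).mp ⟨h3n, by norm_num, h3sq⟩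
      omega
    · -- d odd
      have hd3 : 3 ≤ d := by omega
      have h2n : ¬ 2 ∣ n := by
        intro h2n
        obtain ⟨i, hi, hie⟩ := (hmem 2).mp ⟨h2n, by norm_num, by nlinarith⟩
        omega
      have htri : 3 ∣ d ∨ 3 ∣ (d + 1*2) ∨ 3 ∣ (d + 2*2) := by clear * - hd; omega
      have h3n : 3 ∣ n := by
        rcases htri with h | h | h
        · exact h.trans hd_dvd
        · exact h.trans hd2_dvd
        · exact h.trans hd4_dvd
      obtain ⟨i0, hi0, hi0e⟩ := (hmem 3).mp ⟨h3n, by norm_num, by nlinarith⟩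
      have hd3' : d = 3 := by omega
      subst hd3'
      have hall : ∀ j, j < k → (3 + j * 2) ∣ n ∧ (3 + j * 2) ^ 2 < n := by
        intro j hj
        obtain ⟨hh1, _, hh3⟩ := (hmem (3 + j * 2)).mpr ⟨j, hj, rfl⟩
        exact ⟨hh1, hh3⟩
      obtain ⟨t, rfl⟩ : ∃ t, k = t + 6 := ⟨k - 6, by omega⟩
      rcases Nat.eq_zero_or_pos t with rfl | ht1
      · -- k = 6 : elements 3,5,7,9,11,13
        obtain ⟨h5, _⟩ := hall 1 (by omega)
        obtain ⟨h9, _⟩ := hall 3 (by omega)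
        obtain ⟨h11, _⟩ := hall 4 (by omega)
        obtain ⟨h13, _⟩ := hall 5 (by omega)
        norm_num at h5 h9 h11 h13
        have hP : (6435:ℕ) ∣ n := by
          have a1 : (9*5:ℕ) ∣ n := (by decide : Nat.Coprime 9 5).mul_dvd_of_dvd_of_dvd h9 h5
          have a2 : (11*(9*5):ℕ) ∣ n := (by decide : Nat.Coprime 11 (9*5)).mul_dvd_of_dvd_of_dvd h11 a1
          have a3 : (13*(11*(9*5)):ℕ) ∣ n := (by decide : Nat.Coprime 13 (11*(9*5))).mul_dvd_of_dvd_of_dvd h13 a2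
          convert a3 using 1
        have hPle := Nat.le_of_dvd hn hP
        have hx : (39:ℕ) ∣ n := by
          have := (by decide : Nat.Coprime 3 13).mul_dvd_of_dvd_of_dvd h3n h13
          convert this using 1
        obtain ⟨i, hi, hie⟩ := (hmem 39).mp ⟨hx, by norm_num, by nlinarith⟩
        omega
      · -- t ≥ 1, M = 2t+13 ≥ 15
        obtain ⟨hM, _⟩ := hall (t+5) (by omega)
        obtain ⟨hM2, _⟩ := hall (t+4) (by omega)
        obtain ⟨hM4, _⟩ := hall (t+3) (by omega)
        have c1 : Nat.Coprime (3+(t+5)*2) (3+(t+4)*2) := cop_gap (c := 2) (by omega) (by omega) (by norm_num)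
        have c2 : Nat.Coprime (3+(t+4)*2) (3+(t+3)*2) := cop_gap (c := 2) (by omega) (by omega) (by norm_num)
        have c3 : Nat.Coprime (3+(t+5)*2) (3+(t+3)*2) := cop_gap (c := 4) (by omega) (by omega) (by norm_num)
        have hP : (3+(t+5)*2) * (3+(t+4)*2) * (3+(t+3)*2) ∣ n :=
          (Nat.Coprime.mul c3 c2).mul_dvd_of_dvd_of_dvd
            (c1.mul_dvd_of_dvd_of_dvd hM hM2) hM4
        have hPle := Nat.le_of_dvd hn hP
        by_cases h3M : 3 ∣ (3+(t+5)*2)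
        · have h3M2 : ¬ 3 ∣ (3+(t+4)*2) := by omega
          have cx : Nat.Coprime 3 (3+(t+4)*2) := (Nat.prime_three.coprime_iff_not_dvd).mpr h3M2
          have hx_dvd : 3 * (3+(t+4)*2) ∣ n := cx.mul_dvd_of_dvd_of_dvd h3n hM2
          have hxsq : (3 * (3+(t+4)*2)) ^ 2 < n := by nlinarith
          obtain ⟨i, hi, hie⟩ := (hmem (3 * (3+(t+4)*2))).mp ⟨hx_dvd, by omega, hxsq⟩
          omega
        · have cx : Nat.Coprime 3 (3+(t+5)*2) := (Nat.prime_three.coprime_iff_not_dvd).mpr h3M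
          have hx_dvd : 3 * (3+(t+5)*2) ∣ n := cx.mul_dvd_of_dvd_of_dvd h3n hM
          have hxsq : (3 * (3+(t+5)*2)) ^ 2 < n := by nlinarith
          obtain ⟨i, hi, hie⟩ := (hmem (3 * (3+(t+5)*2))).mp ⟨hx_dvd, by omega, hxsq⟩
          omega
end

section
/- Let n be a positive integer and suppose A_n = {d + i·a : 0 ≤ i ≤ k − 1} for some positive integers d, a, k (so A_n is an arithmetic progression with k terms, first term d, and common difference a). If k ≥ 6, then a is even and the smallest prime factor of n is at least 3 (i.e., n is odd). -/
private lemma aux_cube (K : ℕ) (h : 9 ≤ K) :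
    8 * (K + 2) ^ 2 < (K + 1) * (K * (K + 2)) := by
  nlinarith [Nat.mul_le_mul_left (K * K) h]

set_option maxHeartbeats 1000000 in
theorem statement_6 (n : ℕ) (hn : 0 < n) (d a k : ℕ) (hd : 0 < d) (ha : 0 < a)
    (hk : 0 < k) (hA : A n = (Finset.range k).image (fun i => d + i * a))
    (hk6 : 6 ≤ k) : Even a ∧ 3 ≤ n.minFac := by
  have memA : ∀ x, x ∈ A n ↔ x ∣ n ∧ 1 < x ∧ x ^ 2 < n := by
    intro x; simp [A, Nat.mem_divisors, hn.ne', and_assoc]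
  have elem : ∀ i, i < k → (d + i * a) ∣ n ∧ 1 < d + i * a ∧ (d + i * a) ^ 2 < n := by
    intro i hi
    have hx : d + i * a ∈ A n := by
      rw [hA]; exact Finset.mem_image.mpr ⟨i, Finset.mem_range.mpr hi, rfl⟩
    exact (memA _).mp hx
  have rev : ∀ x, x ∣ n → 1 < x → x ^ 2 < n → ∃ i, i < k ∧ x = d + i * a := by
    intro x h1 h2 h3
    have hx : x ∈ A n := (memA x).mpr ⟨h1, h2, h3⟩
    rw [hA] at hx
    obtain ⟨i, hi, hix⟩ := Finset.mem_image.mp hx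
    exact ⟨i, Finset.mem_range.mp hi, hix.symm⟩
  obtain ⟨hdd, hd1, hd2⟩ := elem 0 (by omega)
  simp only [Nat.zero_mul, Nat.add_zero] at hdd hd1 hd2
  -- n is odd
  have hodd : ¬ 2 ∣ n := by
    intro h2
    -- d = 2
    have h4n : 2 ^ 2 < n := by
      have : 2 ^ 2 ≤ d ^ 2 := Nat.pow_le_pow_left hd1 2
      omega
    obtain ⟨i, hi, h2eq⟩ := rev 2 h2 (by norm_num) h4n
    have hd2' : d = 2 := by
      have h0 : 0 ≤ i * a := Nat.zero_le _
      linarith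
    subst hd2'
    rcases Nat.even_or_odd a with he | ho
    · -- a even, a = 2c
      obtain ⟨c, hc⟩ := he
      have hc1 : 1 ≤ c := by omega
      obtain ⟨ha1, hb1, hs1⟩ := elem 1 (by omega)
      simp only [Nat.one_mul] at ha1 hb1 hs1
      have hcd : (1 + c) ∣ n := dvd_trans ⟨2, by omega⟩ ha1
      have hcs : (1 + c) ^ 2 < n := by
        have : (1 + c) ^ 2 ≤ (2 + a) ^ 2 := Nat.pow_le_pow_left (by omega) 2
        omega
      obtain ⟨j, hj, hjeq⟩ := rev (1 + c) hcd (by omega) hcs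
      have hj0 : j = 0 := by
        by_contra hj0
        have h1 : a ≤ j * a := Nat.le_mul_of_pos_left a (by omega)
        linarith
      subst hj0
      simp only [Nat.zero_mul, Nat.add_zero] at hjeq
      have ha2 : a = 2 := by omega
      -- a = 2 : element 2 + 5*2 = 12 divides n, so 3 divides n, but 3 is odd
      obtain ⟨ha5, hb5, hs5⟩ := elem 5 (by omega)
      rw [ha2] at ha5 hs5
      norm_num at ha5 hs5
      have h3d : (3 : ℕ) ∣ n := dvd_trans (by norm_num) ha5
      have h3s : (3 : ℕ) ^ 2 < n := by omega
      obtain ⟨j', hj', hjeq'⟩ := rev 3 h3d (by norm_num) h3s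
      rw [ha2] at hjeq'
      omega
    · -- a odd
      obtain ⟨c, hc⟩ := ho
      obtain ⟨ha2, hb2, hs2⟩ := elem 2 (by omega)
      have h4d : (4 : ℕ) ∣ n := dvd_trans ⟨c + 1, by omega⟩ ha2
      have h4s : (4 : ℕ) ^ 2 < n := by
        have : (4 : ℕ) ^ 2 ≤ (2 + 2 * a) ^ 2 := Nat.pow_le_pow_left (by omega) 2
        omega
      obtain ⟨j, hj, hjeq⟩ := rev 4 h4d (by norm_num) h4s
      have hja : j * a = 2 := by linarith
      have ha1 : a = 1 := by
        rcases Nat.eq_zero_or_pos j with h | h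
        · rw [h] at hja; simp at hja
        · have h1 : a ≤ j * a := Nat.le_mul_of_pos_left a h
          omega
      subst ha1
      simp only [Nat.mul_one] at *
      -- every 2 ≤ x ≤ k+1 divides n
      have hdvd : ∀ x, 2 ≤ x → x ≤ k + 1 → x ∣ n := by
        intro x hx1 hx2
        have h := (elem (x - 2) (by omega)).1
        have hx : 2 + (x - 2) = x := by omega
        rwa [hx] at h
      have h3 : (3:ℕ) ∣ n := hdvd 3 (by omega) (by omega)
      have h4 : (4:ℕ) ∣ n := hdvd 4 (by omega) (by omega)
      have h5 : (5:ℕ) ∣ n := hdvd 5 (by omega) (by omega)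
      have h7 : (7:ℕ) ∣ n := hdvd 7 (by omega) (by omega)
      have hn420 : 420 ≤ n := by
        have h12 : (12:ℕ) ∣ n :=
          Nat.Coprime.mul_dvd_of_dvd_of_dvd (by norm_num) h3 h4
        have h60 : (60:ℕ) ∣ n :=
          Nat.Coprime.mul_dvd_of_dvd_of_dvd (by norm_num : Nat.Coprime 5 12) h5 h12
        have h420 : (420:ℕ) ∣ n :=
          Nat.Coprime.mul_dvd_of_dvd_of_dvd (by norm_num : Nat.Coprime 7 60) h7 h60
        exact Nat.le_of_dvd hn h420
      -- choose m: the odd one among k, k+1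
      obtain ⟨m, hmodd, hmlb, hmub⟩ : ∃ m, Odd m ∧ k ≤ m ∧ m ≤ k + 1 := by
        rcases Nat.even_or_odd k with h | h
        · exact ⟨k + 1, Even.add_one h, by omega, by omega⟩
        · exact ⟨k, h, by omega, by omega⟩
      have hmd : m ∣ n := hdvd m (by omega) (by omega)
      have h2m : 2 * m ∣ n :=
        Nat.Coprime.mul_dvd_of_dvd_of_dvd (Nat.coprime_two_left.mpr hmodd) h2 hmd
      -- need (2m)^2 < n
      have hbig : 4 * (k + 1) ^ 2 < n := by
        rcases le_or_gt k 9 with hk9 | hk10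
        · have : (k + 1) ^ 2 ≤ 10 ^ 2 := Nat.pow_le_pow_left (by omega) 2
          omega
        · -- n ≥ k * lcm(k-1, k+1) ≥ k(k-1)(k+1)/2
          obtain ⟨K, rfl⟩ : ∃ K, k = K + 1 := ⟨k - 1, by omega⟩
          have hK9 : 9 ≤ K := by omega
          have hkm1 : K ∣ n := hdvd K (by omega) (by omega)
          have hkp1 : (K + 2) ∣ n := hdvd (K + 2) (by omega) (by omega)
          have hk0 : (K + 1) ∣ n := hdvd (K + 1) (by omega) (by omega)
          have hL : Nat.lcm K (K + 2) ∣ n := Nat.lcm_dvd hkm1 hkp1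
          have hc1 : Nat.Coprime (K + 1) K := by simp
          have hc2 : Nat.Coprime (K + 1) (K + 2) := by
            have h' : Nat.Coprime (K + 1 + 1) (K + 1) := by simp
            exact h'.symm
          have hLd : Nat.lcm K (K + 2) ∣ K * (K + 2) :=
            Nat.lcm_dvd (dvd_mul_right _ _) (dvd_mul_left _ _)
          have hcop : Nat.Coprime (K + 1) (Nat.lcm K (K + 2)) :=
            Nat.Coprime.coprime_dvd_right hLd (hc1.mul_right hc2)
          have hmul : (K + 1) * Nat.lcm K (K + 2) ∣ n :=
            hcop.mul_dvd_of_dvd_of_dvd hk0 hL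
          have hnk : (K + 1) * Nat.lcm K (K + 2) ≤ n := Nat.le_of_dvd hn hmul
          have hgl : Nat.gcd K (K + 2) * Nat.lcm K (K + 2) = K * (K + 2) :=
            Nat.gcd_mul_lcm _ _
          have hg2 : Nat.gcd K (K + 2) ≤ 2 := by
            have hgd : Nat.gcd K (K + 2) ∣ 2 := by
              have h' := Nat.dvd_sub (Nat.gcd_dvd_right K (K + 2))
                (Nat.gcd_dvd_left K (K + 2))
              rwa [show K + 2 - K = 2 by omega] at h'
            exact Nat.le_of_dvd (by norm_num) hgd
          have h2L : K * (K + 2) ≤ 2 * Nat.lcm K (K + 2) := by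
            calc K * (K + 2) = Nat.gcd K (K + 2) * Nat.lcm K (K + 2) := hgl.symm
            _ ≤ 2 * Nat.lcm K (K + 2) := Nat.mul_le_mul_right _ hg2
          have hkL : (K + 1) * (K * (K + 2)) ≤ 2 * n := by
            calc (K + 1) * (K * (K + 2)) ≤ (K + 1) * (2 * Nat.lcm K (K + 2)) :=
                  Nat.mul_le_mul_left _ h2L
            _ = 2 * ((K + 1) * Nat.lcm K (K + 2)) := by ring
            _ ≤ 2 * n := by omega
          have hkk : 8 * (K + 2) ^ 2 < (K + 1) * (K * (K + 2)) := aux_cube K hK9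
          have hgoal : 8 * (K + 2) ^ 2 < 2 * n := lt_of_lt_of_le hkk hkL
          linarith [hgoal]
      have h2ms : (2 * m) ^ 2 < n := by
        have h1 : (2 * m) ^ 2 ≤ (2 * (k + 1)) ^ 2 := Nat.pow_le_pow_left (by omega) 2
        have h2' : (2 * (k + 1)) ^ 2 = 4 * (k + 1) ^ 2 := by ring
        omega
      obtain ⟨j', hj', hjeq'⟩ := rev (2 * m) h2m (by omega) h2ms
      omega
  -- conclude
  obtain ⟨hda, _, _⟩ := elem 1 (by omega)
  simp only [Nat.one_mul] at hda
  have hnd2 : ¬ 2 ∣ d := fun h => hodd (h.trans hdd)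
  have hnda : ¬ 2 ∣ (d + a) := fun h => hodd (h.trans hda)
  have n1 : 1 < n := by
    have : 2 ^ 2 ≤ d ^ 2 := Nat.pow_le_pow_left hd1 2
    omega
  have hmf : (n.minFac).Prime := Nat.minFac_prime (by omega)
  have hmf2 : n.minFac ≠ 2 := by
    intro h
    exact hodd (h ▸ Nat.minFac_dvd n)
  exact ⟨by rw [Nat.even_iff]; omega, by have := hmf.two_le; omega⟩
end

section
/- Let n be a positive integer and suppose A_n = {d + i·a : 0 ≤ i ≤ k − 1} for some positive integers d, a, k (so A_n is an arithmetic progression with k terms and common difference a). If a > 2 and k ≥ 6, then k ≥ a + 3. -/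
set_option maxHeartbeats 2000000 in
theorem statement_7 (n : ℕ) (hn : 0 < n) (d a k : ℕ) (hd : 0 < d) (ha : 2 < a)
    (hk : 6 ≤ k) (hA : A n = (Finset.range k).image (fun i => d + i * a)) :
    a + 3 ≤ k := by
  by_contra hcon
  push_neg at hcon
  have hk1 : k - 1 ≤ a + 1 := by omega
  have ha0 : 0 < a := by omega
  -- membership characterization
  have hmem : ∀ x : ℕ, (x ∣ n ∧ 1 < x ∧ x ^ 2 < n) ↔ ∃ i, i < k ∧ x = d + i * a := by
    intro x
    constructor
    · rintro ⟨h1, h2, h3⟩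
      have hx : x ∈ A n := by
        simp only [A, Finset.mem_filter, Nat.mem_divisors]
        exact ⟨⟨h1, hn.ne'⟩, h2, h3⟩
      rw [hA] at hx
      simp only [Finset.mem_image, Finset.mem_range] at hx
      obtain ⟨i, hi, hix⟩ := hx
      exact ⟨i, hi, hix.symm⟩
    · rintro ⟨i, hi, rfl⟩
      have hx : d + i * a ∈ A n := by
        rw [hA]
        exact Finset.mem_image_of_mem _ (Finset.mem_range.2 hi)
      simp only [A, Finset.mem_filter, Nat.mem_divisors] at hx
      exact ⟨hx.1.1, hx.2.1, hx.2.2⟩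
  have hel : ∀ i, i < k → (d + i * a) ∣ n ∧ 1 < d + i * a ∧ (d + i * a) ^ 2 < n :=
    fun i hi => (hmem _).2 ⟨i, hi, rfl⟩
  have h0 := hel 0 (by omega)
  rw [show d + 0 * a = d by ring] at h0
  obtain ⟨hdn, hd1, hd2⟩ := h0
  -- d is the least nontrivial "small" divisor
  have hmin : ∀ x, x ∣ n → 1 < x → x ^ 2 < n → d ≤ x := by
    intro x h1 h2 h3
    obtain ⟨i, _, hix⟩ := (hmem x).1 ⟨h1, h2, h3⟩
    subst hix
    exact Nat.le_add_right d (i * a)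
  -- d is prime
  have hp : d.Prime := by
    have hmf : d.minFac.Prime := Nat.minFac_prime (by omega)
    have h1 : d.minFac ∣ n := (Nat.minFac_dvd d).trans hdn
    have h3 : d.minFac ^ 2 < n :=
      lt_of_le_of_lt (Nat.pow_le_pow_left (Nat.minFac_le (by omega)) 2) hd2
    have hge := hmin _ h1 hmf.one_lt h3
    have heq : d.minFac = d := le_antisymm (Nat.minFac_le (by omega)) hge
    rwa [← heq]
  -- d does not divide a
  have hnda : ¬ d ∣ a := by
    rintro ⟨b, rfl⟩
    have hb : 0 < b := by
      rcases Nat.eq_zero_or_pos b with rfl | h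
      · simp at ha
      · exact h
    have h1 := hel 1 (by omega)
    have h2 := hel 2 (by omega)
    have key : ∀ c, 0 < c → c ≤ d →
        (d + c * (d * b)) ∣ n → (d + c * (d * b)) ^ 2 < n → 1 + c * b = d := by
      intro c hc hcd hdv hsq
      have hu_small : 1 + c * b < d + 1 * (d * b) := by
        have : c * b ≤ d * b := Nat.mul_le_mul_right b hcd
        have : 1 * (d * b) = d * b := one_mul _
        omega
      have hlt : 1 + c * b < d + c * (d * b) := by
        have h1c : 1 * (d * b) ≤ c * (d * b) := Nat.mul_le_mul_right _ hc
        omega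
      have e : d + c * (d * b) = d * (1 + c * b) := by ring
      have hu_dvd : (1 + c * b) ∣ n := dvd_trans ⟨d, by rw [e]; ring⟩ hdv
      have hu1 : 1 < 1 + c * b := by
        have : 0 < c * b := Nat.mul_pos hc hb
        omega
      have hu2 : (1 + c * b) ^ 2 < n :=
        lt_of_le_of_lt (Nat.pow_le_pow_left (le_of_lt hlt) 2) hsq
      obtain ⟨i, hik, hui⟩ := (hmem _).1 ⟨hu_dvd, hu1, hu2⟩
      rcases Nat.eq_zero_or_pos i with rfl | hi
      · rw [show d + 0 * (d * b) = d by ring] at hui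
        exact hui
      · exfalso
        have h1le : d + 1 * (d * b) ≤ d + i * (d * b) :=
          Nat.add_le_add_left (Nat.mul_le_mul_right _ hi) d
        omega
    have e1 := key 1 (by omega) (by omega) h1.1 h1.2.2
    have e2 := key 2 (by omega) (by omega) h2.1 h2.2.2
    omega
  have hcop : Nat.Coprime a d := ((Nat.Prime.coprime_iff_not_dvd hp).2 hnda).symm
  -- any composite element is d*d and is the top element
  have hcomp : ∀ x, x ∣ n → 1 < x → x ^ 2 < n → ¬ x.Prime →
      x = d * d ∧ x = d + (k - 1) * a := by
    intro x hxn hx1 hx2 hxp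
    set s := x.minFac with hs_def
    have hsp : s.Prime := Nat.minFac_prime (by omega)
    have hsx : s ∣ x := Nat.minFac_dvd x
    have hs2x : s ^ 2 ≤ x := Nat.minFac_sq_le_self (by omega) hxp
    have hsn : s ∣ n := hsx.trans hxn
    have hs1 : 1 < s := hsp.one_lt
    have hsx_le : s ≤ x := Nat.le_of_dvd (by omega) hsx
    have hs2 : s ^ 2 < n := lt_of_le_of_lt (Nat.pow_le_pow_left hsx_le 2) hx2
    obtain ⟨i, hik, hsi⟩ := (hmem s).1 ⟨hsn, hs1, hs2⟩
    set t := x / s with ht_def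
    have hst : s * t = x := Nat.mul_div_cancel' hsx
    have htx : t ∣ x := ⟨s, by rw [← hst]; ring⟩
    have htn : t ∣ n := htx.trans hxn
    have ht1 : 1 < t := by
      have hstle : s * s ≤ s * t := by
        rw [hst]; nlinarith
      have := Nat.le_of_mul_le_mul_left hstle (by omega : 0 < s)
      omega
    have htx_le : t ≤ x := Nat.le_of_dvd (by omega) htx
    have ht2 : t ^ 2 < n := lt_of_le_of_lt (Nat.pow_le_pow_left htx_le 2) hx2
    obtain ⟨j, hjk, htj⟩ := (hmem t).1 ⟨htn, ht1, ht2⟩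
    obtain ⟨m, hmk, hxm⟩ := (hmem x).1 ⟨hxn, hx1, hx2⟩
    -- congruence: d*d ≡ d [MOD a]
    have hs_eq : s ≡ d [MOD a] := by
      rw [hsi]; exact (Nat.add_mul_mod_self_right d i a)
    have ht_eq : t ≡ d [MOD a] := by
      rw [htj]; exact (Nat.add_mul_mod_self_right d j a)
    have hx_eq : x ≡ d [MOD a] := by
      rw [hxm]; exact (Nat.add_mul_mod_self_right d m a)
    have hdd : d * d ≡ d [MOD a] := by
      calc d * d ≡ s * t [MOD a] := (hs_eq.mul ht_eq).symm
        _ = x := hst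
        _ ≡ d [MOD a] := hx_eq
    have hddvd : a ∣ d * d - d := (Nat.modEq_iff_dvd' (Nat.le_mul_of_pos_left d hd)).1 hdd.symm
    have hsub : d * d - d = (d - 1) * d := by
      rw [Nat.sub_one_mul]
    have hadvd : a ∣ d - 1 := hcop.dvd_of_dvd_mul_right (by rw [← hsub]; exact hddvd)
    have had : a + 1 ≤ d := by
      have := Nat.le_of_dvd (by omega) hadvd
      omega
    -- bounds
    have hds : d ≤ s := hmin s hsn hs1 hs2
    have hxdd : d * d ≤ x := le_trans (Nat.mul_le_mul hds hds) (by nlinarith)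
    have hxle : x ≤ d + (k - 1) * a := by
      rw [hxm]
      exact Nat.add_le_add_left (Nat.mul_le_mul_right a (by omega : m ≤ k - 1)) d
    have hL : d + (k - 1) * a ≤ d + (a + 1) * a :=
      Nat.add_le_add_left (Nat.mul_le_mul_right a hk1) d
    have key : d + (a + 1) * a ≤ d * d := by
      have f1 : (a + 1) * a ≤ d * a := Nat.mul_le_mul_right a had
      have f2 : d * (a + 1) ≤ d * d := Nat.mul_le_mul_left d had
      nlinarith
    have hxd : x = d * d := le_antisymm (le_trans hxle (le_trans hL key)) hxdd
    refine ⟨hxd, le_antisymm hxle ?_⟩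
    rw [hxd]
    exact le_trans hL key
  -- the elements d + i*a for 1 ≤ i ≤ 4 are prime
  have hq : ∀ i, 1 ≤ i → i ≤ 4 → (d + i * a).Prime := by
    intro i hi1 hi4
    by_contra hnp
    have hi := hel i (by omega)
    obtain ⟨_, hl⟩ := hcomp _ hi.1 hi.2.1 hi.2.2 hnp
    have : i * a = (k - 1) * a := by omega
    have : i = k - 1 := Nat.eq_of_mul_eq_mul_right ha0 this
    omega
  have hq1 : (d + 1 * a).Prime := hq 1 (le_refl 1) (by omega)
  have hq2 : (d + 2 * a).Prime := hq 2 (by omega) (by omega)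
  have hq3 : (d + 3 * a).Prime := hq 3 (by omega) (by omega)
  have hq4 : (d + 4 * a).Prime := hq 4 (by omega) (by omega)
  have hn1 := hel 1 (by omega)
  have hn2 := hel 2 (by omega)
  have hn3 := hel 3 (by omega)
  have hn4 := hel 4 (by omega)
  -- d*(d+a) divides n
  have hc01 : Nat.Coprime d (d + 1 * a) := (Nat.coprime_primes hp hq1).2 (by omega)
  have hm1 : d * (d + 1 * a) ∣ n := Nat.Coprime.mul_dvd_of_dvd_of_dvd hc01 hdn hn1.1
  -- n ≤ (d*(d+a))^2
  have hnle : n ≤ (d * (d + 1 * a)) ^ 2 := by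
    by_contra hlt
    push_neg at hlt
    have h1 : 1 < d * (d + 1 * a) := by nlinarith
    have hnp : ¬ (d * (d + 1 * a)).Prime := by
      intro hpr
      rcases (Nat.Prime.eq_one_or_self_of_dvd hpr d ⟨d + 1 * a, rfl⟩) with h | h
      · omega
      · nlinarith
    obtain ⟨he, _⟩ := hcomp _ hm1 h1 hlt hnp
    have : d + 1 * a = d := Nat.eq_of_mul_eq_mul_left (by omega) he.symm ▸ rfl
    omega
  -- the product of the five primes divides n
  have hc2 : Nat.Coprime (d * (d + 1 * a)) (d + 2 * a) :=
    Nat.Coprime.mul ((Nat.coprime_primes hp hq2).2 (by omega))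
      ((Nat.coprime_primes hq1 hq2).2 (by omega))
  have hm2 : d * (d + 1 * a) * (d + 2 * a) ∣ n :=
    Nat.Coprime.mul_dvd_of_dvd_of_dvd hc2 hm1 hn2.1
  have hc3 : Nat.Coprime (d * (d + 1 * a) * (d + 2 * a)) (d + 3 * a) :=
    Nat.Coprime.mul
      (Nat.Coprime.mul ((Nat.coprime_primes hp hq3).2 (by omega))
        ((Nat.coprime_primes hq1 hq3).2 (by omega)))
      ((Nat.coprime_primes hq2 hq3).2 (by omega))
  have hm3 : d * (d + 1 * a) * (d + 2 * a) * (d + 3 * a) ∣ n :=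
    Nat.Coprime.mul_dvd_of_dvd_of_dvd hc3 hm2 hn3.1
  have hc4 : Nat.Coprime (d * (d + 1 * a) * (d + 2 * a) * (d + 3 * a)) (d + 4 * a) :=
    Nat.Coprime.mul
      (Nat.Coprime.mul
        (Nat.Coprime.mul ((Nat.coprime_primes hp hq4).2 (by omega))
          ((Nat.coprime_primes hq1 hq4).2 (by omega)))
        ((Nat.coprime_primes hq2 hq4).2 (by omega)))
      ((Nat.coprime_primes hq3 hq4).2 (by omega))
  have hm4 : d * (d + 1 * a) * (d + 2 * a) * (d + 3 * a) * (d + 4 * a) ∣ n :=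
    Nat.Coprime.mul_dvd_of_dvd_of_dvd hc4 hm3 hn4.1
  have hQn : d * (d + 1 * a) * (d + 2 * a) * (d + 3 * a) * (d + 4 * a) ≤ n :=
    Nat.le_of_dvd hn hm4
  -- final contradiction
  have hX0 : 0 < d * (d + 1 * a) := by positivity
  have inner : d * (d + 1 * a) < (d + 2 * a) * (d + 3 * a) * (d + 4 * a) := by
    have i1 : d * (d + 1 * a) < (d + 2 * a) * (d + 3 * a) := by nlinarith
    have i2 : (d + 2 * a) * (d + 3 * a) * 1 ≤ (d + 2 * a) * (d + 3 * a) * (d + 4 * a) :=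
      Nat.mul_le_mul_left _ (by omega)
    calc d * (d + 1 * a) < (d + 2 * a) * (d + 3 * a) := i1
      _ = (d + 2 * a) * (d + 3 * a) * 1 := by ring
      _ ≤ (d + 2 * a) * (d + 3 * a) * (d + 4 * a) := i2
  have hbig : (d * (d + 1 * a)) ^ 2
      < d * (d + 1 * a) * (d + 2 * a) * (d + 3 * a) * (d + 4 * a) := by
    calc (d * (d + 1 * a)) ^ 2 = (d * (d + 1 * a)) * (d * (d + 1 * a)) := sq (d * (d + 1 * a))
      _ < (d * (d + 1 * a)) * ((d + 2 * a) * (d + 3 * a) * (d + 4 * a)) :=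
          mul_lt_mul_of_pos_left inner hX0
      _ = d * (d + 1 * a) * (d + 2 * a) * (d + 3 * a) * (d + 4 * a) := by ring
  exact absurd (lt_of_le_of_lt hnle (lt_of_lt_of_le hbig hQn)) (lt_irrefl n)
end

section
/- Let n be a positive integer and suppose A_n = {d + i·a : 0 ≤ i ≤ k − 1} for some positive integers d, a, k with k ≥ 2 (so A_n is an arithmetic progression with k terms and common difference a). If a > 2, then k ≤ 5. -/
theorem statement_8 (n : ℕ) (hn : 0 < n) (d a k : ℕ) (hd : 0 < d) (ha : 2 < a)
    (hk : 2 ≤ k) (hA : A n = (Finset.range k).image (fun i => d + i * a)) :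
    k ≤ 5 := by
  by_contra hk5
  push_neg at hk5
  have hk6 : 6 ≤ k := hk5
  clear hk hk5
  obtain ⟨j0, rfl⟩ : ∃ j0, k = j0 + 6 := ⟨k - 6, by omega⟩
  have hAdef : ∀ x : ℕ, x ∈ A n ↔ (x ∣ n ∧ 1 < x ∧ x ^ 2 < n) := by
    intro x
    simp only [A, Finset.mem_filter, Nat.mem_divisors]
    constructor
    · rintro ⟨⟨h1, _⟩, h2, h3⟩; exact ⟨h1, h2, h3⟩
    · rintro ⟨h1, h2, h3⟩; exact ⟨⟨h1, hn.ne'⟩, h2, h3⟩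
  have hmem : ∀ x : ℕ, x ∈ A n ↔ ∃ i, i < j0 + 6 ∧ x = d + i * a := by
    intro x; rw [hA]
    simp only [Finset.mem_image, Finset.mem_range]
    constructor
    · rintro ⟨i, hi, rfl⟩; exact ⟨i, hi, rfl⟩
    · rintro ⟨i, hi, rfl⟩; exact ⟨i, hi, rfl⟩
  have hdiv : ∀ i, i < j0 + 6 → ((d + i * a) ∣ n ∧ 1 < d + i * a ∧ (d + i * a) ^ 2 < n) :=
    fun i hi => (hAdef _).mp ((hmem _).mpr ⟨i, hi, rfl⟩)
  have hform : ∀ x : ℕ, x ∣ n → 1 < x → x ^ 2 < n → ∃ i, i < j0 + 6 ∧ x = d + i * a :=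
    fun x h1 h2 h3 => (hmem x).mp ((hAdef x).mpr ⟨h1, h2, h3⟩)
  have hgap : ∀ x : ℕ, x ∣ n → 1 < x → x ^ 2 < n → x = d ∨ d + a ≤ x := by
    intro x h1 h2 h3
    obtain ⟨i, hi, rfl⟩ := hform x h1 h2 h3
    rcases Nat.eq_zero_or_pos i with h | h
    · left; rw [h]; simp
    · right; have : a ≤ i * a := Nat.le_mul_of_pos_left a h; omega
  have hd1 : 1 < d := by
    have := (hdiv 0 (by omega)).2.1; simpa using this
  have hddvd : d ∣ n := by simpa using (hdiv 0 (by omega)).1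
  have ht1 := hdiv 1 (by omega)
  have hn1 : (d + a) ^ 2 < n := by
    have := ht1.2.2; simpa [one_mul] using this
  have ht1d : (d + a) ∣ n := by
    have := ht1.1; simpa [one_mul] using this
  have hnbig : 25 < n := by nlinarith [hn1]
  have hnn1 : n ≠ 1 := by omega
  -- d is the least prime factor of n
  have hmp : Nat.Prime n.minFac := Nat.minFac_prime hnn1
  have hmd : n.minFac ≤ d := Nat.minFac_le_of_dvd hd1 hddvd
  have hm2 : n.minFac ^ 2 < n := by
    have h1 : n.minFac ^ 2 ≤ d ^ 2 := Nat.pow_le_pow_left hmd 2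
    nlinarith [hn1]
  have hgm := hgap n.minFac (Nat.minFac_dvd n) hmp.one_lt hm2
  have hdm : d = n.minFac := by omega
  have hdprime : Nat.Prime d := hdm ▸ hmp
  by_cases hd7 : 7 ≤ d
  · -- main case : d ≥ 7
    -- Step 1 : d does not divide a
    have hda : ¬ d ∣ a := by
      rintro ⟨e, rfl⟩
      have he1 : 1 ≤ e := by
        rcases Nat.eq_zero_or_pos e with h | h
        · subst h; simp at ha
        · exact h
      have hed : e ≤ d * e := Nat.le_mul_of_pos_left e (by omega)
      have hu : (1 + e) ∣ n := dvd_trans ⟨d, by ring⟩ ht1d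
      have helt : 1 + e < d + d * e := by omega
      have hu2 : (1 + e) ^ 2 < n := lt_trans (Nat.pow_lt_pow_left helt two_ne_zero) hn1
      rcases hgap (1 + e) hu (by omega) hu2 with h | h
      · -- 1 + e = d, i.e. a = d*(d-1) ; look at the third term
        have ht2 := hdiv 2 (by omega)
        have hv : (1 + 2 * e) ∣ n := dvd_trans ⟨d, by ring⟩ ht2.1
        have hee : e ≤ e * e := Nat.le_mul_of_pos_left e he1
        have hde : d * e = e + e * e := by rw [← h]; ring
        have hvlt : 1 + 2 * e < d + d * e := by omega
        have hv2 : (1 + 2 * e) ^ 2 < n := lt_trans (Nat.pow_lt_pow_left hvlt two_ne_zero) hn1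
        have := hgap (1 + 2 * e) hv (by omega) hv2
        omega
      · omega
    have hcd : Nat.Coprime d a := (Nat.Prime.coprime_iff_not_dvd hdprime).mpr hda
    have hca : ∀ i : ℕ, Nat.Coprime (d + i * a) a := fun i =>
      (Nat.coprime_add_mul_right_left d a i).mpr hcd
    -- no prime ≤ 5 divides n
    have hq5 : ∀ q : ℕ, Nat.Prime q → q ∣ n → ¬ q ≤ 5 := by
      intro q hq hqn hqle
      have hq2 : q ^ 2 < n := by nlinarith [hn1]
      have := hgap q hqn hq.one_lt hq2
      omega
    -- pairwise coprimality of the last six terms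
    have hcop : ∀ r s : ℕ, r < s → s ≤ 5 →
        Nat.Coprime (d + (j0 + r) * a) (d + (j0 + s) * a) := by
      intro r s hrs hs5
      by_contra hg
      have hg1 : Nat.gcd (d + (j0 + r) * a) (d + (j0 + s) * a) ∣ d + (j0 + r) * a :=
        Nat.gcd_dvd_left _ _
      have hg2 : Nat.gcd (d + (j0 + r) * a) (d + (j0 + s) * a) ∣ d + (j0 + s) * a :=
        Nat.gcd_dvd_right _ _
      set g := Nat.gcd (d + (j0 + r) * a) (d + (j0 + s) * a) with hgdef
      have hmul : (j0 + s) * a = (j0 + r) * a + (s - r) * a := by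
        rw [← Nat.add_mul]; congr 1; omega
      have heq : d + (j0 + s) * a = (d + (j0 + r) * a) + (s - r) * a := by omega
      have hg3 : g ∣ (s - r) * a := (Nat.dvd_add_right hg1).mp (heq ▸ hg2)
      have hgco : Nat.Coprime g a := Nat.Coprime.coprime_dvd_left hg1 (hca _)
      have hg4 : g ∣ (s - r) := hgco.dvd_of_dvd_mul_right hg3
      have hgle : g ≤ 5 := le_trans (Nat.le_of_dvd (by omega) hg4) (by omega)
      have hgne : g ≠ 1 := hg
      have hqp := Nat.minFac_prime hgne
      have hgpos : 0 < g := Nat.pos_of_ne_zero (by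
        intro h0
        have := Nat.eq_zero_of_gcd_eq_zero_left (hgdef ▸ h0)
        omega)
      have hqn : g.minFac ∣ n :=
        dvd_trans (dvd_trans (Nat.minFac_dvd g) hg1) (hdiv (j0 + r) (by omega)).1
      exact hq5 _ hqp hqn (le_trans (Nat.minFac_le hgpos) hgle)
    -- the six terms
    obtain ⟨hT0d, hT0one, hT0sq⟩ := hdiv (j0 + 0) (by omega)
    obtain ⟨hT1d, hT1one, hT1sq⟩ := hdiv (j0 + 1) (by omega)
    obtain ⟨hT2d, hT2one, hT2sq⟩ := hdiv (j0 + 2) (by omega)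
    obtain ⟨hT3d, hT3one, hT3sq⟩ := hdiv (j0 + 3) (by omega)
    obtain ⟨hT4d, hT4one, hT4sq⟩ := hdiv (j0 + 4) (by omega)
    obtain ⟨hT5d, hT5one, hT5sq⟩ := hdiv (j0 + 5) (by omega)
    have hc05 : Nat.Coprime (d + (j0 + 0) * a) (d + (j0 + 5) * a) :=
      hcop 0 5 (by norm_num) le_rfl
    have hcdvd : (d + (j0 + 0) * a) * (d + (j0 + 5) * a) ∣ n :=
      hc05.mul_dvd_of_dvd_of_dvd hT0d hT5d
    -- n ≤ c²
    have hnc : n ≤ ((d + (j0 + 0) * a) * (d + (j0 + 5) * a)) ^ 2 := by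
      by_contra hlt
      push_neg at hlt
      have hone : 1 < (d + (j0 + 0) * a) * (d + (j0 + 5) * a) := by
        calc 1 < 2 * 2 := by norm_num
        _ ≤ (d + (j0 + 0) * a) * (d + (j0 + 5) * a) :=
          Nat.mul_le_mul (by omega) (by omega)
      obtain ⟨i, hik, hci⟩ := hform _ hcdvd hone hlt
      have hle : i * a ≤ (j0 + 5) * a := Nat.mul_le_mul_right a (by omega)
      have hTle : 2 * (d + (j0 + 5) * a) ≤ (d + (j0 + 0) * a) * (d + (j0 + 5) * a) :=
        Nat.mul_le_mul_right _ (by omega)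
      omega
    -- product of the six terms divides n
    have h12dvd : (d + (j0 + 1) * a) * (d + (j0 + 2) * a) ∣ n :=
      (hcop 1 2 (by norm_num) (by norm_num)).mul_dvd_of_dvd_of_dvd hT1d hT2d
    have h34dvd : (d + (j0 + 3) * a) * (d + (j0 + 4) * a) ∣ n :=
      (hcop 3 4 (by norm_num) (by norm_num)).mul_dvd_of_dvd_of_dvd hT3d hT4d
    have h1234co : Nat.Coprime ((d + (j0 + 1) * a) * (d + (j0 + 2) * a))
        ((d + (j0 + 3) * a) * (d + (j0 + 4) * a)) :=
      Nat.Coprime.mul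
        (Nat.Coprime.mul_right (hcop 1 3 (by norm_num) (by norm_num))
          (hcop 1 4 (by norm_num) (by norm_num)))
        (Nat.Coprime.mul_right (hcop 2 3 (by norm_num) (by norm_num))
          (hcop 2 4 (by norm_num) (by norm_num)))
    have hA1dvd : ((d + (j0 + 1) * a) * (d + (j0 + 2) * a)) *
        ((d + (j0 + 3) * a) * (d + (j0 + 4) * a)) ∣ n :=
      h1234co.mul_dvd_of_dvd_of_dvd h12dvd h34dvd
    have cop0 : Nat.Coprime (d + (j0 + 0) * a)
        (((d + (j0 + 1) * a) * (d + (j0 + 2) * a)) *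
          ((d + (j0 + 3) * a) * (d + (j0 + 4) * a))) :=
      Nat.Coprime.mul_right
        (Nat.Coprime.mul_right (hcop 0 1 (by norm_num) (by norm_num))
          (hcop 0 2 (by norm_num) (by norm_num)))
        (Nat.Coprime.mul_right (hcop 0 3 (by norm_num) (by norm_num))
          (hcop 0 4 (by norm_num) (by norm_num)))
    have cop5 : Nat.Coprime (d + (j0 + 5) * a)
        (((d + (j0 + 1) * a) * (d + (j0 + 2) * a)) *
          ((d + (j0 + 3) * a) * (d + (j0 + 4) * a))) :=
      Nat.Coprime.mul_right
        (Nat.Coprime.mul_right (hcop 1 5 (by norm_num) (by norm_num)).symm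
          (hcop 2 5 (by norm_num) (by norm_num)).symm)
        (Nat.Coprime.mul_right (hcop 3 5 (by norm_num) (by norm_num)).symm
          (hcop 4 5 (by norm_num) (by norm_num)).symm)
    have hcA1 : Nat.Coprime ((d + (j0 + 0) * a) * (d + (j0 + 5) * a))
        (((d + (j0 + 1) * a) * (d + (j0 + 2) * a)) *
          ((d + (j0 + 3) * a) * (d + (j0 + 4) * a))) :=
      Nat.Coprime.mul cop0 cop5
    have hPdvd : ((d + (j0 + 0) * a) * (d + (j0 + 5) * a)) *
        (((d + (j0 + 1) * a) * (d + (j0 + 2) * a)) *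
          ((d + (j0 + 3) * a) * (d + (j0 + 4) * a))) ∣ n :=
      hcA1.mul_dvd_of_dvd_of_dvd hcdvd hA1dvd
    have hPle : ((d + (j0 + 0) * a) * (d + (j0 + 5) * a)) *
        (((d + (j0 + 1) * a) * (d + (j0 + 2) * a)) *
          ((d + (j0 + 3) * a) * (d + (j0 + 4) * a))) ≤ n :=
      Nat.le_of_dvd hn hPdvd
    -- inequalities
    have h12 : (d + (j0 + 5) * a) < (d + (j0 + 1) * a) * (d + (j0 + 2) * a) := by
      have e52 : d + (j0 + 5) * a = (d + (j0 + 2) * a) + 3 * a := by ring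
      have haT1 : a ≤ (j0 + 1) * a := Nat.le_mul_of_pos_left a (by omega)
      have ht1ge : 10 ≤ d + (j0 + 1) * a := by omega
      have hmul : 10 * (d + (j0 + 2) * a) ≤ (d + (j0 + 1) * a) * (d + (j0 + 2) * a) :=
        Nat.mul_le_mul_right _ ht1ge
      have haT2 : a ≤ (j0 + 2) * a := Nat.le_mul_of_pos_left a (by omega)
      omega
    have h34 : (d + (j0 + 0) * a) < (d + (j0 + 3) * a) * (d + (j0 + 4) * a) := by
      have h1 : d + (j0 + 3) * a ≤ (d + (j0 + 3) * a) * (d + (j0 + 4) * a) :=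
        Nat.le_mul_of_pos_right _ (by omega)
      have h2 : (d + (j0 + 0) * a) + 3 * a = d + (j0 + 3) * a := by ring
      omega
    have hlt2 : (d + (j0 + 0) * a) * (d + (j0 + 5) * a) <
        ((d + (j0 + 1) * a) * (d + (j0 + 2) * a)) *
          ((d + (j0 + 3) * a) * (d + (j0 + 4) * a)) := by
      calc (d + (j0 + 0) * a) * (d + (j0 + 5) * a)
          < ((d + (j0 + 3) * a) * (d + (j0 + 4) * a)) *
            ((d + (j0 + 1) * a) * (d + (j0 + 2) * a)) := Nat.mul_lt_mul'' h34 h12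
        _ = _ := mul_comm _ _
    have hfin : ((d + (j0 + 0) * a) * (d + (j0 + 5) * a)) *
        ((d + (j0 + 0) * a) * (d + (j0 + 5) * a)) <
        ((d + (j0 + 0) * a) * (d + (j0 + 5) * a)) *
        (((d + (j0 + 1) * a) * (d + (j0 + 2) * a)) *
          ((d + (j0 + 3) * a) * (d + (j0 + 4) * a))) := by
      have hpos : 0 < (d + (j0 + 0) * a) * (d + (j0 + 5) * a) := by positivity
      exact (mul_lt_mul_iff_right₀ hpos).mpr hlt2
    have hsq : ((d + (j0 + 0) * a) * (d + (j0 + 5) * a)) ^ 2 =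
        ((d + (j0 + 0) * a) * (d + (j0 + 5) * a)) *
        ((d + (j0 + 0) * a) * (d + (j0 + 5) * a)) := sq _
    omega
  · -- small cases : d ∈ {2, 3, 5}
    have hd6 : d ≠ 6 := fun h => absurd (h ▸ hdprime) (by decide)
    have hdk : d < j0 + 6 := by omega
    have hT := hdiv d hdk
    have hw : (1 + a) ∣ n := dvd_trans ⟨d, by ring⟩ hT.1
    have hwlt : 1 + a < d + a := by omega
    have hw2 : (1 + a) ^ 2 < n := lt_trans (Nat.pow_lt_pow_left hwlt two_ne_zero) hn1
    have hgw := hgap (1 + a) hw (by omega) hw2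
    have hd5a4 : d = 5 ∧ a = 4 := by
      rcases hgw with h | h
      · have h45 : d = 4 ∨ d = 5 := by omega
        rcases h45 with h4 | h5
        · exact absurd (h4 ▸ hdprime) (by decide)
        · exact ⟨h5, by omega⟩
      · omega
    obtain ⟨rfl, rfl⟩ := hd5a4
    have h9 : (9 : ℕ) ∣ n := by
      have := ht1.1; norm_num at this; exact this
    have h3 : (3 : ℕ) ∣ n := dvd_trans (by norm_num) h9
    have := hgap 3 h3 (by norm_num) (by nlinarith [hn1])
    omega
end

section
/- Let n be a positive integer and suppose A_n = {d + i·a : 0 ≤ i ≤ k − 1} for some positive integers d, a, k with k ≥ 3 (so A_n is an arithmetic progression with at least 3 terms, first term d, and common difference a). Then d does not divide a. -/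
theorem statement_9 (n : ℕ) (hn : 0 < n) (d a k : ℕ) (hd : 0 < d) (ha : 0 < a)
    (hk : 3 ≤ k) (hA : A n = (Finset.range k).image (fun i => d + i * a)) :
    ¬ d ∣ a := by
  rintro ⟨b, hb⟩
  have hb0 : 0 < b := by
    rcases Nat.eq_zero_or_pos b with h | h
    · rw [h, Nat.mul_zero] at hb; omega
    · exact h
  have hmem : ∀ x, x ∈ A n ↔ (x ∣ n ∧ 1 < x ∧ x ^ 2 < n) := by
    intro x
    simp [A, Nat.mem_divisors, hn.ne', and_assoc]
  have himg : ∀ x, x ∈ A n ↔ ∃ i, i < k ∧ d + i * a = x := by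
    intro x; rw [hA]; simp [Finset.mem_image, Finset.mem_range]
  -- d ∈ A n
  have hdA : d ∈ A n := (himg d).mpr ⟨0, by omega, by ring⟩
  have hd2 : 1 < d := ((hmem d).mp hdA).2.1
  -- d + a ∈ A n
  have h1A : d + 1 * a ∈ A n := (himg _).mpr ⟨1, by omega, rfl⟩
  obtain ⟨h1dvd, h1gt, h1sq⟩ := (hmem _).mp h1A
  -- d + 2a ∈ A n
  have h2A : d + 2 * a ∈ A n := (himg _).mpr ⟨2, by omega, rfl⟩
  obtain ⟨h2dvd, h2gt, h2sq⟩ := (hmem _).mp h2A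
  -- Step 1: e = 1 + b ∈ A n, deduce d = b + 1
  have he1 : d + 1 * a = (1 + b) * d := by rw [hb]; ring
  have heA : (1 + b) ∈ A n := by
    rw [hmem]
    refine ⟨dvd_trans ⟨d, he1⟩ h1dvd, by omega, ?_⟩
    calc (1 + b) ^ 2 ≤ ((1 + b) * d) ^ 2 :=
          Nat.pow_le_pow_left (Nat.le_mul_of_pos_right _ hd) 2
      _ < n := by rw [← he1]; exact h1sq
  obtain ⟨i, hik, hi⟩ := (himg _).mp heA
  have hdb : d = b + 1 := by
    rcases Nat.eq_zero_or_pos i with h | h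
    · rw [h] at hi; omega
    · exfalso
      have h1 : a ≤ i * a := Nat.le_mul_of_pos_left a h
      have h2 : 2 * b ≤ d * b := Nat.mul_le_mul_right b hd2
      omega
  subst hdb
  have ha2 : a = (b + 1) * b := by rw [hb]
  clear hb hi hik heA he1 h1A h2A hdA i
  -- Step 2: f = 2b + 1 ∈ A n, contradiction
  have hf1 : (b + 1) + 2 * a = (2 * b + 1) * (b + 1) := by rw [ha2]; ring
  have hfA : (2 * b + 1) ∈ A n := by
    rw [hmem]
    refine ⟨dvd_trans ⟨b + 1, hf1⟩ h2dvd, by omega, ?_⟩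
    calc (2 * b + 1) ^ 2 ≤ ((2 * b + 1) * (b + 1)) ^ 2 :=
          Nat.pow_le_pow_left (Nat.le_mul_of_pos_right _ (by omega)) 2
      _ < n := by rw [← hf1]; exact h2sq
  obtain ⟨j, hjk, hj⟩ := (himg _).mp hfA
  rcases Nat.eq_zero_or_pos j with h | h
  · rw [h] at hj; omega
  · have h1 : a ≤ j * a := Nat.le_mul_of_pos_left a h
    have h2 : (b + 1) * b ≥ 2 * b := Nat.mul_le_mul_right b (by omega)
    omega
end

section
/- Let n be a positive integer. Then |A_n| = 1 if and only if n = pq for some primes p < q, or n = p^3 for some prime p, or n = p^4 for some prime p. In each of these cases A_n = {p}. -/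
lemma mem_A {n d : ℕ} (hn : n ≠ 0) : d ∈ A n ↔ d ∣ n ∧ 1 < d ∧ d ^ 2 < n := by
  simp [A, Nat.mem_divisors, hn, and_assoc]

lemma A_pq {p q : ℕ} (hp : p.Prime) (hq : q.Prime) (hpq : p < q) : A (p * q) = {p} := by
  have hp2 := hp.two_le
  have hq2 := hq.two_le
  have hn : p * q ≠ 0 := by positivity
  ext d
  rw [mem_A hn, Finset.mem_singleton]
  constructor
  · rintro ⟨hdvd, hd1, hd2⟩
    have hd : d = 1 ∨ d = p ∨ d = q ∨ d = p * q := by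
      by_cases hpd : p ∣ d
      · obtain ⟨e, rfl⟩ := hpd
        have he : e ∣ q := (mul_dvd_mul_iff_left (by omega : p ≠ 0)).mp hdvd
        rcases (hq.eq_one_or_self_of_dvd e he) with h | h <;> subst h <;> simp
      · have hcop : Nat.Coprime p d := (Nat.Prime.coprime_iff_not_dvd hp).mpr hpd
        have := Nat.Coprime.dvd_of_dvd_mul_left (Nat.Coprime.symm hcop) hdvd
        rcases (hq.eq_one_or_self_of_dvd d this) with h | h <;> simp [h]
    rcases hd with rfl | rfl | rfl | rfl
    · omega
    · rfl
    · exfalso; nlinarith [hd2]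
    · exfalso; nlinarith [hd2]
  · rintro rfl
    exact ⟨Dvd.intro q rfl, by omega, by nlinarith⟩

lemma A_ppow {p : ℕ} (hp : p.Prime) {n : ℕ} (h : n = p ^ 3 ∨ n = p ^ 4) : A n = {p} := by
  have hp2 := hp.two_le
  rcases h with rfl | rfl
  · have hn : p ^ 3 ≠ 0 := by positivity
    ext d
    rw [mem_A hn, Finset.mem_singleton]
    constructor
    · rintro ⟨hdvd, hd1, hd2⟩
      obtain ⟨i, hi, rfl⟩ := (Nat.dvd_prime_pow hp).mp hdvd
      interval_cases i
      · norm_num at hd1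
      · exact pow_one p
      · exfalso; rw [← pow_mul] at hd2; norm_num at hd2
        exact absurd hd2 (not_lt.mpr (Nat.pow_le_pow_right (by omega) (by norm_num)))
      · exfalso; rw [← pow_mul] at hd2
        exact absurd hd2 (not_lt.mpr (Nat.pow_le_pow_right (by omega) (by norm_num)))
    · rintro rfl
      exact ⟨dvd_pow_self _ (by norm_num), by omega,
        Nat.pow_lt_pow_right (by omega) (by norm_num)⟩
  · have hn : p ^ 4 ≠ 0 := by positivity
    ext d
    rw [mem_A hn, Finset.mem_singleton]
    constructor
    · rintro ⟨hdvd, hd1, hd2⟩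
      obtain ⟨i, hi, rfl⟩ := (Nat.dvd_prime_pow hp).mp hdvd
      interval_cases i
      · norm_num at hd1
      · exact pow_one p
      · exfalso; rw [← pow_mul] at hd2; norm_num at hd2
      · exfalso; rw [← pow_mul] at hd2
        exact absurd hd2 (not_lt.mpr (Nat.pow_le_pow_right (by omega) (by norm_num)))
      · exfalso; rw [← pow_mul] at hd2
        exact absurd hd2 (not_lt.mpr (Nat.pow_le_pow_right (by omega) (by norm_num)))
    · rintro rfl
      exact ⟨dvd_pow_self _ (by norm_num), by omega,
        Nat.pow_lt_pow_right (by omega) (by norm_num)⟩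

lemma A_forward {n : ℕ} (h : (A n).card = 1) :
    (∃ p q : ℕ, p.Prime ∧ q.Prime ∧ p < q ∧ n = p * q) ∨
    (∃ p : ℕ, p.Prime ∧ (n = p ^ 3 ∨ n = p ^ 4)) := by
  obtain ⟨d₀, hd₀⟩ := Finset.card_eq_one.mp h
  have hn : n ≠ 0 := by
    rintro rfl
    simp [A] at hd₀
  have hd₀mem : d₀ ∈ A n := hd₀ ▸ Finset.mem_singleton_self d₀
  obtain ⟨hd₀dvd, hd₀1, hd₀2⟩ := (mem_A hn).mp hd₀mem
  have hn1 : n ≠ 1 := by nlinarith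
  have hpp : n.minFac.Prime := Nat.minFac_prime hn1
  set p := n.minFac with hpdef
  have hpd : p ∣ n := Nat.minFac_dvd n
  have hp2 := hpp.two_le
  have hple : p ≤ d₀ := Nat.minFac_le_of_dvd hd₀1 hd₀dvd
  have hpA : p ∈ A n := (mem_A hn).mpr ⟨hpd, hpp.one_lt,
    lt_of_le_of_lt (Nat.pow_le_pow_left hple 2) hd₀2⟩
  have hpd₀ : p = d₀ := by rw [hd₀] at hpA; exact Finset.mem_singleton.mp hpA
  have hAp : A n = {p} := by rw [hd₀, hpd₀]
  have hA : ∀ e, e ∣ n → 1 < e → e ^ 2 < n → e = p := by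
    intro e he h1 h2
    have := (mem_A hn).mpr ⟨he, h1, h2⟩
    rw [hAp] at this
    exact Finset.mem_singleton.mp this
  have hpsq : p ^ 2 < n := by rw [hpd₀]; exact hd₀2
  have hmin : ∀ e, e ∣ n → 1 < e → p ≤ e := fun e he h1 => Nat.minFac_le_of_dvd h1 he
  by_cases h2 : p ^ 2 ∣ n
  · by_cases h3 : p ^ 3 ∣ n
    · right
      obtain ⟨j, hj⟩ := h3
      have hn4 : n ≤ p ^ 4 := by
        by_contra hlt
        push_neg at hlt
        have hsq : p ^ 2 = p := hA (p ^ 2) h2 (by nlinarith) (by rw [← pow_mul]; exact hlt)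
        nlinarith
      have hj0 : j ≠ 0 := by rintro rfl; simp at hj; exact hn hj
      have hjp : j ≤ p := by
        have hle : p ^ 3 * j ≤ p ^ 3 * p := by
          calc p ^ 3 * j = n := hj.symm
          _ ≤ p ^ 4 := hn4
          _ = p ^ 3 * p := by ring
        exact Nat.le_of_mul_le_mul_left hle (by positivity)
      rcases eq_or_lt_of_le (Nat.one_le_iff_ne_zero.mpr hj0) with h1 | h1
      · exact ⟨p, hpp, Or.inl (by rw [hj, ← h1, mul_one])⟩
      · have hjn : j ∣ n := ⟨p ^ 3, by rw [hj]; ring⟩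
        have hlep : p ≤ j := hmin j hjn h1
        have hjep : j = p := le_antisymm hjp hlep
        exact ⟨p, hpp, Or.inr (by rw [hj, hjep]; ring)⟩
    · exfalso
      obtain ⟨k, hk⟩ := h2
      have hpk : ¬ p ∣ k := by
        rintro ⟨t, rfl⟩
        exact h3 ⟨t, by rw [hk]; ring⟩
      have hk0 : k ≠ 0 := by rintro rfl; simp at hk; exact hn hk
      have hk1 : 1 < k := by
        rcases Nat.lt_or_ge k 2 with hlt | hge
        · interval_cases k
          · omega
          · rw [hk, mul_one] at hpsq; omega
        · omega
      have hqp : k.minFac.Prime := Nat.minFac_prime (by omega)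
      set q := k.minFac with hqdef
      have hqk : q ∣ k := Nat.minFac_dvd k
      have hqn : q ∣ n := hqk.trans ⟨p ^ 2, by rw [hk]; ring⟩
      have hqne : q ≠ p := fun hh => hpk (hh ▸ hqk)
      have hpq : p < q := lt_of_le_of_ne (hmin q hqn hqp.one_lt) (Ne.symm hqne)
      have hn4 : n ≤ p ^ 4 := by
        by_contra hlt
        push_neg at hlt
        have hsq : p ^ 2 = p := hA (p ^ 2) ⟨k, hk⟩ (by nlinarith) (by rw [← pow_mul]; exact hlt)
        nlinarith
      have hkp2 : k ≤ p ^ 2 := by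
        have hle : p ^ 2 * k ≤ p ^ 2 * p ^ 2 := by
          calc p ^ 2 * k = n := hk.symm
          _ ≤ p ^ 4 := hn4
          _ = p ^ 2 * p ^ 2 := by ring
        exact Nat.le_of_mul_le_mul_left hle (by positivity)
      have hqlek : q ≤ k := Nat.minFac_le (by omega)
      have hqsq : n ≤ q ^ 2 := by
        by_contra hlt
        push_neg at hlt
        exact hqne (hA q hqn hqp.one_lt hlt)
      have h1 : p ^ 2 * q ≤ q * q := by
        calc p ^ 2 * q ≤ p ^ 2 * k := Nat.mul_le_mul_left _ hqlek
        _ = n := hk.symm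
        _ ≤ q ^ 2 := hqsq
        _ = q * q := sq q
      have hq_ge : p ^ 2 ≤ q := Nat.le_of_mul_le_mul_right h1 hqp.pos
      have hqe : q = p ^ 2 := le_antisymm (le_trans hqlek hkp2) hq_ge
      have hpdq : p ∣ q := hqe ▸ dvd_pow_self p (by norm_num)
      rcases (hqp.eq_one_or_self_of_dvd p hpdq) with hh | hh <;> omega
  · left
    obtain ⟨m, hm⟩ := hpd
    have hpm : ¬ p ∣ m := by
      rintro ⟨t, rfl⟩
      exact h2 ⟨t, by rw [hm]; ring⟩
    have hm1 : 1 < m := by nlinarith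
    have hqp : m.minFac.Prime := Nat.minFac_prime (by omega)
    set q := m.minFac with hqdef
    have hqm : q ∣ m := Nat.minFac_dvd m
    have hqn : q ∣ n := hqm.trans ⟨p, by rw [hm]; ring⟩
    have hqne : q ≠ p := fun hh => hpm (hh ▸ hqm)
    have hpq : p < q := lt_of_le_of_ne (hmin q hqn hqp.one_lt) (Ne.symm hqne)
    obtain ⟨r, hr⟩ := hqm
    by_cases hr1 : r = 1
    · exact ⟨p, q, hpp, hqp, hpq, by rw [hm, hr, hr1, mul_one]⟩
    · exfalso
      have hr0 : r ≠ 0 := by rintro rfl; simp at hr; omega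
      have hr2 : 1 < r := by omega
      have hqsq : n ≤ q ^ 2 := by
        by_contra hlt
        push_neg at hlt
        exact hqne (hA q hqn hqp.one_lt hlt)
      have hnval : n = p * q * r := by rw [hm, hr]; ring
      have h1 : (p * r) * q ≤ q * q := by
        calc (p * r) * q = p * q * r := by ring
        _ = n := hnval.symm
        _ ≤ q ^ 2 := hqsq
        _ = q * q := sq q
      have hqge : p * r ≤ q := Nat.le_of_mul_le_mul_right h1 hqp.pos
      have hrq : r ≤ q := le_trans (Nat.le_mul_of_pos_left r (by omega)) hqge
      have hq_lt : q < p * q := by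
        calc q = 1 * q := (one_mul q).symm
        _ < p * q := (Nat.mul_lt_mul_right hqp.pos).mpr (by omega)
      have hrlt : r ^ 2 < n := by
        calc r ^ 2 = r * r := sq r
        _ ≤ q * r := Nat.mul_le_mul_right r hrq
        _ < (p * q) * r := (Nat.mul_lt_mul_right (by omega : 0 < r)).mpr hq_lt
        _ = n := by rw [hnval]
      have hrn : r ∣ n := ⟨p * q, by rw [hnval]; ring⟩
      have hrp : r = p := hA r hrn hr2 hrlt
      exact hpm (hrp ▸ ⟨q, by rw [hr]; ring⟩)

theorem statement_11 (n : ℕ) (hn : 0 < n) :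
    ((A n).card = 1 ↔
      (∃ p q : ℕ, p.Prime ∧ q.Prime ∧ p < q ∧ n = p * q) ∨
      (∃ p : ℕ, p.Prime ∧ (n = p ^ 3 ∨ n = p ^ 4))) ∧
    (∀ p q : ℕ, p.Prime → q.Prime → p < q → n = p * q → A n = {p}) ∧
    (∀ p : ℕ, p.Prime → (n = p ^ 3 ∨ n = p ^ 4) → A n = {p}) := by
  refine ⟨⟨A_forward, ?_⟩, fun p q hp hq hpq hnpq => hnpq ▸ A_pq hp hq hpq,
    fun p hp h => A_ppow hp h⟩
  rintro (⟨p, q, hp, hq, hpq, rfl⟩ | ⟨p, hp, h⟩)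
  · rw [A_pq hp hq hpq]; simp
  · rw [A_ppow hp h]; simp
end

section
/- Let p < q be primes and let n = p^2 q^2. If A_n is in arithmetic progression, then n = 36 (i.e., p = 2 and q = 3), in which case A_n = {2, 3, 4}. -/
lemma A_eq (p q : ℕ) (hp : p.Prime) (hq : q.Prime) (hpq : p < q) :
    A (p ^ 2 * q ^ 2) = {p, q, p ^ 2} := by
  have hp1 := hp.one_lt
  have hq1 := hq.one_lt
  have h1p : 1 < p ^ 2 := by nlinarith
  have h1q : 1 < q ^ 2 := by nlinarith
  have hpq2 : p ^ 2 < q ^ 2 := by nlinarith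
  have hP0 : 0 < p ^ 2 := by positivity
  have hQ0 : 0 < q ^ 2 := by positivity
  have hPQ : 0 < p ^ 2 * q ^ 2 := by positivity
  have h1n : 1 < p ^ 2 * q ^ 2 := by nlinarith
  ext x
  simp only [A, Finset.mem_filter, Nat.mem_divisors, Finset.mem_insert, Finset.mem_singleton]
  constructor
  · rintro ⟨⟨hdvd, hn0⟩, h1, h2⟩
    obtain ⟨u, v, hu, hv, rfl⟩ := exists_dvd_and_dvd_of_dvd_mul hdvd
    obtain ⟨i, hi, rfl⟩ := (Nat.dvd_prime_pow hp).mp hu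
    obtain ⟨j, hj, rfl⟩ := (Nat.dvd_prime_pow hq).mp hv
    interval_cases i <;> interval_cases j
    · norm_num at h1
    · right; left; simp
    · exfalso; simp only [pow_zero, one_mul, mul_pow] at h2; nlinarith [hpq2, hQ0]
    · left; simp
    · exfalso; simp only [pow_one, mul_pow] at h2; nlinarith [hPQ]
    · exfalso; simp only [pow_one, mul_pow] at h2; nlinarith [h1q, hPQ]
    · right; right; simp
    · exfalso; simp only [pow_one, mul_pow] at h2; nlinarith [h1p, hPQ]
    · exfalso; simp only [mul_pow] at h2; nlinarith [h1n, hPQ]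
  · have hn0 : p ^ 2 * q ^ 2 ≠ 0 := by positivity
    rintro (rfl | rfl | rfl) <;>
        refine ⟨⟨?_, hn0⟩, by nlinarith, by nlinarith⟩ <;>
      first
        | exact dvd_mul_right _ _
        | exact dvd_mul_of_dvd_left (dvd_pow_self _ (by norm_num)) _
        | exact dvd_mul_of_dvd_right (dvd_pow_self _ (by norm_num)) _

theorem statement_13 (p q : ℕ) (hp : p.Prime) (hq : q.Prime) (hpq : p < q)
    (h : IsAP (A (p ^ 2 * q ^ 2))) :
    p = 2 ∧ q = 3 ∧ p ^ 2 * q ^ 2 = 36 ∧ A (p ^ 2 * q ^ 2) = ({2, 3, 4} : Finset ℕ) := by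
  have hp1 := hp.one_lt
  have hq1 := hq.one_lt
  have hA := A_eq p q hp hq hpq
  have hPp : p ^ 2 = p * p := sq p
  have hneqP : q ≠ p ^ 2 := by
    intro hqe
    have hdq : p ∣ q := ⟨p, by rw [hqe, hPp]⟩
    have := (Nat.prime_dvd_prime_iff_eq hp hq).mp hdq
    omega
  have hpP : p < p ^ 2 := by nlinarith
  have hne1 : p ≠ q := hpq.ne
  have hne2 : p ≠ p ^ 2 := Nat.ne_of_lt hpP
  have hcard : ({p, q, p ^ 2} : Finset ℕ).card = 3 := by
    rw [Finset.card_insert_of_notMem (by simp [hne1, hne2]),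
      Finset.card_insert_of_notMem (by simpa using hneqP), Finset.card_singleton]
  obtain ⟨d, a, hd, ha, hS⟩ := h
  rw [hA, hcard] at hS
  have hmem : ∀ x ∈ ({p, q, p ^ 2} : Finset ℕ), x = d ∨ x = d + a ∨ x = d + (a + a) := by
    intro x hx
    rw [hS] at hx
    simp only [Finset.mem_image, Finset.mem_range] at hx
    obtain ⟨i, hi, hix⟩ := hx
    interval_cases i <;> omega
  have hmem' : ∀ y, (y = d ∨ y = d + a ∨ y = d + (a + a)) → (y = p ∨ y = q ∨ y = p ^ 2) := by
    intro y hy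
    have hy2 : y ∈ ({p, q, p ^ 2} : Finset ℕ) := by
      rw [hS]
      simp only [Finset.mem_image, Finset.mem_range]
      rcases hy with rfl | rfl | rfl
      · exact ⟨0, by omega, by ring⟩
      · exact ⟨1, by omega, by ring⟩
      · exact ⟨2, by omega, by ring⟩
    simpa using hy2
  have e1 := hmem p (by simp)
  have e2 := hmem q (by simp)
  have e3 := hmem (p ^ 2) (by simp)
  have f1 := hmem' d (Or.inl rfl)
  have f2 := hmem' (d + a) (Or.inr (Or.inl rfl))
  have f3 := hmem' (d + (a + a)) (Or.inr (Or.inr rfl))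
  have hkey : 2 * q = p + p ^ 2 ∨ 2 * p ^ 2 = p + q := by
    generalize hP : p ^ 2 = P at e1 e2 e3 f1 f2 f3 hneqP hpP hne2 ⊢
    omega
  have hp2 : p = 2 ∧ q = 3 := by
    rcases hkey with hk | hk
    · have hdvd : p ∣ 2 * q := ⟨1 + p, by rw [hk, hPp]; ring⟩
      rcases (Nat.Prime.dvd_mul hp).mp hdvd with h2 | hq'
      · have hpe : p = 2 := (Nat.prime_dvd_prime_iff_eq hp Nat.prime_two).mp h2
        subst hpe
        norm_num at hk
        omega
      · have := (Nat.prime_dvd_prime_iff_eq hp hq).mp hq'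
        omega
    · exfalso
      have hd1 : p ∣ 2 * p ^ 2 := ⟨2 * p, by rw [hPp]; ring⟩
      have hd2 : p ∣ q := by
        have hsub := Nat.dvd_sub hd1 (dvd_refl p)
        have heq : 2 * p ^ 2 - p = q := Nat.sub_eq_of_eq_add (by rw [hk, Nat.add_comm])
        rwa [heq] at hsub
      have := (Nat.prime_dvd_prime_iff_eq hp hq).mp hd2
      omega
  obtain ⟨rfl, rfl⟩ := hp2
  exact ⟨rfl, rfl, by norm_num, by rw [hA]; decide⟩
end

section
/- Let p < q < r be primes and let n = pqr. Then A_n is in arithmetic progression if and only if r < pq and 2q = p + r; in that case A_n = {p, q, r}. -/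
lemma dvd_class {p q r d : ℕ} (hp : p.Prime) (hq : q.Prime) (hr : r.Prime)
    (hd : d ∣ p * q * r) :
    d = 1 ∨ d = p ∨ d = q ∨ d = r ∨ d = p*q ∨ d = p*r ∨ d = q*r ∨ d = p*q*r := by
  rcases Nat.dvd_mul.mp hd with ⟨e, b, he, hb, rfl⟩
  rcases Nat.dvd_mul.mp he with ⟨a, c, ha, hc, rfl⟩
  rcases (Nat.Prime.eq_one_or_self_of_dvd hp _ ha) with rfl | rfl <;>
  rcases (Nat.Prime.eq_one_or_self_of_dvd hq _ hc) with rfl | rfl <;>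
  rcases (Nat.Prime.eq_one_or_self_of_dvd hr _ hb) with rfl | rfl <;>
  simp <;> tauto

lemma A_eq_lt {p q r : ℕ} (hp : p.Prime) (hq : q.Prime) (hr : r.Prime)
    (hpq : p < q) (hqr : q < r) (h : r < p * q) :
    A (p*q*r) = {p, q, r} := by
  have hp2 := hp.two_le; have hq2 := hq.two_le; have hr2 := hr.two_le
  have hqpr : q ≤ p * r := le_trans hqr.le (Nat.le_mul_of_pos_left r hp.pos)
  have hpqr2 : p ≤ q * r := le_trans (lt_trans hpq hqr).le (Nat.le_mul_of_pos_left r hq.pos)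
  have hprsq : p * q * r ≤ (p * r) ^ 2 := by nlinarith [hqpr]
  have hqrsq : p * q * r ≤ (q * r) ^ 2 := by nlinarith [hpqr2]
  have hpsq : p ^ 2 < p * q * r := by nlinarith [show p < q * r from lt_of_lt_of_le (lt_trans hpq hqr) (Nat.le_mul_of_pos_left r hq.pos), hp.pos]
  have hqsq : q ^ 2 < p * q * r := by nlinarith [show q < p * r from lt_of_lt_of_le hqr (Nat.le_mul_of_pos_left r hp.pos), hq.pos]
  ext d
  simp only [A, Finset.mem_filter, Nat.mem_divisors, Finset.mem_insert, Finset.mem_singleton]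
  constructor
  · rintro ⟨⟨hd, -⟩, h1, h2⟩
    rcases dvd_class hp hq hr hd with rfl|rfl|rfl|rfl|rfl|rfl|rfl|rfl
    · omega
    · tauto
    · tauto
    · tauto
    · exfalso; nlinarith
    · omega
    · omega
    · exfalso; nlinarith
  · have hn : p * q * r ≠ 0 := by positivity
    rintro (rfl|rfl|rfl)
    · exact ⟨⟨⟨q*r, by ring⟩, hn⟩, hp.one_lt, hpsq⟩
    · exact ⟨⟨⟨p*r, by ring⟩, hn⟩, hq.one_lt, hqsq⟩
    · exact ⟨⟨⟨p*q, by ring⟩, hn⟩, hr.one_lt, by nlinarith⟩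

lemma A_eq_gt {p q r : ℕ} (hp : p.Prime) (hq : q.Prime) (hr : r.Prime)
    (hpq : p < q) (hqr : q < r) (h : p * q < r) :
    A (p*q*r) = {p, q, p*q} := by
  have hp2 := hp.two_le; have hq2 := hq.two_le; have hr2 := hr.two_le
  have hqpr : q ≤ p * r := le_trans hqr.le (Nat.le_mul_of_pos_left r hp.pos)
  have hpqr2 : p ≤ q * r := le_trans (lt_trans hpq hqr).le (Nat.le_mul_of_pos_left r hq.pos)
  have hprsq : p * q * r ≤ (p * r) ^ 2 := by nlinarith [hqpr]
  have hqrsq : p * q * r ≤ (q * r) ^ 2 := by nlinarith [hpqr2]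
  have hpsq : p ^ 2 < p * q * r := by nlinarith [show p < q * r from lt_of_lt_of_le (lt_trans hpq hqr) (Nat.le_mul_of_pos_left r hq.pos), hp.pos]
  have hqsq : q ^ 2 < p * q * r := by nlinarith [show q < p * r from lt_of_lt_of_le hqr (Nat.le_mul_of_pos_left r hp.pos), hq.pos]
  ext d
  simp only [A, Finset.mem_filter, Nat.mem_divisors, Finset.mem_insert, Finset.mem_singleton]
  constructor
  · rintro ⟨⟨hd, -⟩, h1, h2⟩
    rcases dvd_class hp hq hr hd with rfl|rfl|rfl|rfl|rfl|rfl|rfl|rfl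
    · omega
    · tauto
    · tauto
    · exfalso; nlinarith
    · tauto
    · omega
    · omega
    · exfalso; nlinarith
  · have hn : p * q * r ≠ 0 := by positivity
    rintro (rfl|rfl|rfl)
    · exact ⟨⟨⟨q*r, by ring⟩, hn⟩, hp.one_lt, hpsq⟩
    · exact ⟨⟨⟨p*r, by ring⟩, hn⟩, hq.one_lt, hqsq⟩
    · exact ⟨⟨⟨r, by ring⟩, hn⟩, by nlinarith, by nlinarith [h, show 0 < p*q from by positivity]⟩

lemma image_range_three (d a : ℕ) :
    (Finset.range 3).image (fun i => d + i * a) = {d, d + a, d + 2 * a} := by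
  ext x
  simp only [Finset.mem_image, Finset.mem_range, Finset.mem_insert, Finset.mem_singleton]
  constructor
  · rintro ⟨i, hi, rfl⟩; interval_cases i <;> omega
  · rintro (rfl|rfl|rfl)
    exacts [⟨0, by omega, by ring⟩, ⟨1, by omega, by ring⟩, ⟨2, by omega, by ring⟩]

theorem statement_15 (p q r : ℕ) (hp : p.Prime) (hq : q.Prime) (hr : r.Prime)
    (hpq : p < q) (hqr : q < r) :
    (IsAP (A (p * q * r)) ↔ r < p * q ∧ 2 * q = p + r) ∧
    (r < p * q → 2 * q = p + r → A (p * q * r) = ({p, q, r} : Finset ℕ)) := by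
  have hp2 := hp.two_le; have hq2 := hq.two_le; have hr2 := hr.two_le
  have hqpq : q < p * q := by nlinarith
  have hrpq : r ≠ p * q := by
    intro h
    rcases hr.eq_one_or_self_of_dvd p ⟨q, h⟩ with h1 | h1 <;> omega
  constructor
  · constructor
    · rintro ⟨d, a, hd, ha, hS⟩
      rcases lt_or_gt_of_ne hrpq with hlt | hgt
      · refine ⟨hlt, ?_⟩
        rw [A_eq_lt hp hq hr hpq hqr hlt] at hS
        have hcard : ({p, q, r} : Finset ℕ).card = 3 :=
          Finset.card_eq_three.mpr ⟨p, q, r, by omega, by omega, by omega, rfl⟩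
        rw [hcard, image_range_three] at hS
        have key : ∀ x : ℕ, (x = p ∨ x = q ∨ x = r) ↔ (x = d ∨ x = d + a ∨ x = d + 2 * a) := by
          intro x
          have := Finset.ext_iff.mp hS x
          simpa using this
        have k1 := key p; have k2 := key q; have k3 := key r
        have k4 := key d; have k5 := key (d + a); have k6 := key (d + 2 * a)
        omega
      · exfalso
        rw [A_eq_gt hp hq hr hpq hqr hgt] at hS
        have hcard : ({p, q, (p*q : ℕ)} : Finset ℕ).card = 3 :=
          Finset.card_eq_three.mpr ⟨p, q, p*q, by omega, by omega, by omega, rfl⟩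
        rw [hcard, image_range_three] at hS
        have key : ∀ x : ℕ, (x = p ∨ x = q ∨ x = p * q) ↔ (x = d ∨ x = d + a ∨ x = d + 2 * a) := by
          intro x
          have := Finset.ext_iff.mp hS x
          simpa using this
        have k1 := key p; have k2 := key q; have k3 := key (p * q)
        have k4 := key d; have k5 := key (d + a); have k6 := key (d + 2 * a)
        have h2q : 2 * q ≤ p * q := by nlinarith
        omega
    · rintro ⟨h1, h2⟩
      rw [A_eq_lt hp hq hr hpq hqr h1]
      refine ⟨p, q - p, hp.pos, by omega, ?_⟩
      have hcard : ({p, q, r} : Finset ℕ).card = 3 :=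
        Finset.card_eq_three.mpr ⟨p, q, r, by omega, by omega, by omega, rfl⟩
      rw [hcard, image_range_three]
      have e1 : p + (q - p) = q := by omega
      have e2 : p + 2 * (q - p) = r := by omega
      rw [e1, e2]
  · intro h1 h2
    exact A_eq_lt hp hq hr hpq hqr h1
end

section
/- Let p < q be primes and let n = p q^3. Then A_n = {p, q, pq} and A_n is not in arithmetic progression. -/
set_option maxHeartbeats 1000000 in
theorem statement_16 (p q : ℕ) (hp : p.Prime) (hq : q.Prime) (hpq : p < q) :
    A (p * q ^ 3) = ({p, q, p * q} : Finset ℕ) ∧ ¬ IsAP (A (p * q ^ 3)) := by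
  have hp2 := hp.two_le
  have hq2 := hq.two_le
  have hn : p * q ^ 3 ≠ 0 := by positivity
  have hqpq : q < p * q := by nlinarith
  have hq3pos : 0 < q ^ 3 := by positivity
  have key : p * q ^ 3 < q ^ 4 := by
    calc p * q ^ 3 < q * q ^ 3 := (Nat.mul_lt_mul_right hq3pos).mpr hpq
      _ = q ^ 4 := by ring
  have h46 : q ^ 4 ≤ q ^ 6 := Nat.pow_le_pow_right (by omega) (by omega)
  have hpq3 : p < q ^ 3 := by nlinarith
  have hsq1 : p ^ 2 < p * q ^ 3 := by nlinarith [hpq3, hp2]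
  have hsq2 : q ^ 2 < p * q ^ 3 := by nlinarith
  have hsq3 : (p * q) ^ 2 < p * q ^ 3 := by nlinarith
  have hA : A (p * q ^ 3) = ({p, q, p * q} : Finset ℕ) := by
    ext e
    simp only [A, Finset.mem_filter, Nat.mem_divisors, Finset.mem_insert,
      Finset.mem_singleton]
    constructor
    · rintro ⟨⟨hdvd, -⟩, hd1, hd2⟩
      obtain ⟨d1, d2, h1, h2, he⟩ := exists_dvd_and_dvd_of_dvd_mul hdvd
      obtain ⟨i, hi, rfl⟩ := (Nat.dvd_prime_pow hq).mp h2
      subst he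
      rcases hp.eq_one_or_self_of_dvd d1 h1 with h1e | h1e <;> rw [h1e] at hd1 hd2 ⊢
      · interval_cases i
        · norm_num at hd1
        · right; left; ring
        · exfalso; nlinarith
        · exfalso; nlinarith
      · interval_cases i
        · left; ring
        · right; right; ring
        · exfalso; nlinarith [sq_nonneg p, hp2, key, h46]
        · exfalso; nlinarith [sq_nonneg p, hp2, key, h46]
    · rintro (h | h | h) <;> rw [h]
      · exact ⟨⟨dvd_mul_right p _, hn⟩, hp.one_lt, hsq1⟩
      · exact ⟨⟨Dvd.dvd.mul_left (dvd_pow_self q (by norm_num)) p, hn⟩, hq.one_lt, hsq2⟩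
      · exact ⟨⟨mul_dvd_mul_left p (dvd_pow_self q (by norm_num)), hn⟩,
          by nlinarith, hsq3⟩
  refine ⟨hA, ?_⟩
  rintro ⟨d, a, hd, ha, hS⟩
  have hcard : (A (p * q ^ 3)).card = 3 := by
    rw [hA]
    rw [Finset.card_insert_of_notMem, Finset.card_insert_of_notMem,
      Finset.card_singleton]
    · simp only [Finset.mem_singleton]
      exact Nat.ne_of_lt hqpq
    · simp only [Finset.mem_insert, Finset.mem_singleton]
      push_neg
      exact ⟨Nat.ne_of_lt hpq, Nat.ne_of_lt (lt_trans hpq hqpq)⟩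
  rw [hcard, hA] at hS
  have hd_mem : d ∈ ({p, q, p * q} : Finset ℕ) := by
    rw [hS]
    exact Finset.mem_image.mpr ⟨0, by simp, by simp⟩
  have hp_mem : p ∈ ({p, q, p * q} : Finset ℕ) := by simp
  have hq_mem : q ∈ ({p, q, p * q} : Finset ℕ) := by simp
  have hpq_mem : p * q ∈ ({p, q, p * q} : Finset ℕ) := by simp
  rw [hS] at hp_mem hq_mem hpq_mem
  obtain ⟨i, hi, hip⟩ := Finset.mem_image.mp hp_mem
  obtain ⟨j, hj, hjq⟩ := Finset.mem_image.mp hq_mem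
  obtain ⟨k, hk, hkpq⟩ := Finset.mem_image.mp hpq_mem
  simp only [Finset.mem_range] at hi hj hk
  have hdp : d = p := by
    have hdle : d ≤ p := by omega
    simp only [Finset.mem_insert, Finset.mem_singleton] at hd_mem
    rcases hd_mem with h | h | h
    · exact h
    · omega
    · omega
  subst hdp
  interval_cases j <;> interval_cases k <;>
    nlinarith [Nat.mul_le_mul_right q hp2, hqpq, hpq]
end

section
/- There is no positive integer n such that |A_n| = 4 and A_n is in arithmetic progression. Equivalently, if A_n is in arithmetic progression then |A_n| ≠ 4. -/
theorem statement_17 : ¬ ∃ n : ℕ, 0 < n ∧ (A n).card = 4 ∧ IsAP (A n) := by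
  rintro ⟨n, hn, hcard, d, a, hd0, ha0, hS⟩
  rw [hcard] at hS
  have hmem : ∀ m, m ∈ A n ↔ (m ∣ n ∧ 1 < m ∧ m ^ 2 < n) := by
    intro m
    simp [A, Nat.mem_divisors, hn.ne', and_assoc]
  have hset : ∀ m, m ∈ A n ↔ (m = d ∨ m = d + a ∨ m = d + 2*a ∨ m = d + 3*a) := by
    intro m
    rw [hS]
    simp only [Finset.mem_image, Finset.mem_range]
    constructor
    · rintro ⟨i, hi, rfl⟩
      interval_cases i <;> omega
    · rintro (rfl | rfl | rfl | rfl)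
      · exact ⟨0, by omega, by ring⟩
      · exact ⟨1, by omega, by ring⟩
      · exact ⟨2, by omega, by ring⟩
      · exact ⟨3, by omega, by ring⟩
  have key : ∀ m, m ∣ n → 1 < m → m ^ 2 < n →
      (m = d ∨ m = d + a ∨ m = d + 2*a ∨ m = d + 3*a) := by
    intro m h1 h2 h3
    exact (hset m).mp ((hmem m).mpr ⟨h1, h2, h3⟩)
  have elem : ∀ m, (m = d ∨ m = d + a ∨ m = d + 2*a ∨ m = d + 3*a) →
      m ∣ n ∧ 1 < m ∧ m ^ 2 < n := fun m hm => (hmem m).mp ((hset m).mpr hm)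
  obtain ⟨hDd, hd1, _⟩ := elem d (Or.inl rfl)
  obtain ⟨hDs, hs1, _⟩ := elem (d+a) (by tauto)
  obtain ⟨hDt, ht1, _⟩ := elem (d+2*a) (by tauto)
  obtain ⟨hDu, hu1, hsq3⟩ := elem (d+3*a) (by tauto)
  have sqlt : ∀ m, m ≤ d + 3*a → m ^ 2 < n :=
    fun m hm => lt_of_le_of_lt (Nat.pow_le_pow_left hm 2) hsq3
  have hdprime : d.Prime := by
    have hq := Nat.minFac_prime (show d ≠ 1 by omega)
    have hqn : d.minFac ∣ n := (Nat.minFac_dvd d).trans hDd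
    have hqle : d.minFac ≤ d := Nat.minFac_le (by omega)
    have hc := key _ hqn hq.one_lt (sqlt _ (by omega))
    have he : d.minFac = d := by omega
    rwa [← he]
  by_cases hda : d ∣ a
  · -- a = d * k
    obtain ⟨k, hak⟩ := hda
    have hk : 0 < k := by
      rcases Nat.eq_zero_or_pos k with h | h
      · rw [h, mul_zero] at hak; omega
      · exact h
    have h2k : 2*k ≤ a := by
      calc 2*k ≤ d*k := Nat.mul_le_mul_right k (by omega)
      _ = a := hak.symm
    have hdvd1 : (k+1) ∣ d + a := ⟨d, by rw [hak]; ring⟩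
    have hm1 : (k+1) ∣ n := hdvd1.trans hDs
    have hc1 := key (k+1) hm1 (by omega) (sqlt _ (by omega))
    rcases hc1 with h | h | h | h
    · -- k + 1 = d
      have hdvd2 : (2*k+1) ∣ d + 2*a := ⟨k+1, by rw [hak, ← h]; ring⟩
      have hm2 : (2*k+1) ∣ n := hdvd2.trans hDt
      have hc2 := key (2*k+1) hm2 (by omega) (sqlt _ (by omega))
      have haK : a = k*k + k := by rw [hak, ← h]; ring
      have hKk : 1*k ≤ k*k := Nat.mul_le_mul_right k hk
      generalize k*k = K at haK hKk
      omega
    · omega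
    · omega
    · omega
  · -- d ∤ a : s = d + a is prime
    have hsprime : (d+a).Prime := by
      have hq := Nat.minFac_prime (show d + a ≠ 1 by omega)
      have hqn : (d+a).minFac ∣ n := (Nat.minFac_dvd (d+a)).trans hDs
      have hqle : (d+a).minFac ≤ d + a := Nat.minFac_le (by omega)
      have hc := key _ hqn hq.one_lt (sqlt _ (by omega))
      have hnd : (d+a).minFac ≠ d := by
        intro h
        apply hda
        have hds : d ∣ d + a := by have hmf := Nat.minFac_dvd (d+a); rwa [h] at hmf
        have h2 := Nat.dvd_sub hds (dvd_refl d)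
        have he : d + a - d = a := by omega
        rwa [he] at h2
      have he : (d+a).minFac = d + a := by omega
      rwa [← he]
    by_cases hd2 : d = 2
    · -- d = 2, a odd
      subst hd2
      have hdvd : (a+1) ∣ 2 + 2*a := ⟨2, by ring⟩
      have hma : (a+1) ∣ n := hdvd.trans hDt
      have hc := key (a+1) hma (by omega) (sqlt _ (by omega))
      have ha1 : a = 1 := by omega
      subst ha1
      norm_num at hDs hDt hDu hsq3
      have h12 : 3 * 4 ∣ n :=
        (show Nat.Coprime 3 4 by decide).mul_dvd_of_dvd_of_dvd hDs hDt
      have h60 : 12 * 5 ∣ n :=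
        (show Nat.Coprime 12 5 by decide).mul_dvd_of_dvd_of_dvd (by simpa using h12) hDu
      have hn60 : 60 ≤ n := Nat.le_of_dvd hn (by simpa using h60)
      have h6 : (6:ℕ) ∣ n := dvd_trans ⟨2, by norm_num⟩ (show (12:ℕ) ∣ n by simpa using h12)
      have hc6 := key 6 h6 (by omega) (by omega)
      omega
    · -- d odd prime ≥ 3
      have hd3 : 3 ≤ d := by have := hdprime.two_le; omega
      have hn2 : ¬ 2 ∣ n := by
        intro h
        have := key 2 h (by omega) (sqlt 2 (by omega))
        omega
      have hodd : ∀ m, m ∣ n → ¬ 2 ∣ m := fun m hm h2 => hn2 (h2.trans hm)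
      have ha2 : 2 ∣ a := by
        have h1 := hodd d hDd
        have h2 := hodd (d+a) hDs
        omega
      have htprime : (d+2*a).Prime := by
        have hq := Nat.minFac_prime (show d + 2*a ≠ 1 by omega)
        have hqn : (d+2*a).minFac ∣ n := (Nat.minFac_dvd (d+2*a)).trans hDt
        have hqle : (d+2*a).minFac ≤ d + 2*a := Nat.minFac_le (by omega)
        have hc := key _ hqn hq.one_lt (sqlt _ (by omega))
        have hnd : (d+2*a).minFac ≠ d := by
          intro h
          have hdt : d ∣ d + 2*a := by have hmf := Nat.minFac_dvd (d+2*a); rwa [h] at hmf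
          have h2a : d ∣ 2*a := by
            have h2 := Nat.dvd_sub hdt (dvd_refl d)
            have he : d + 2*a - d = 2*a := by omega
            rwa [he] at h2
          rcases (Nat.Prime.dvd_mul hdprime).mp h2a with h | h
          · exact absurd (Nat.le_of_dvd (by omega) h) (by omega)
          · exact hda h
        have hns : (d+2*a).minFac ≠ d + a := by
          intro h
          have hst : (d+a) ∣ d + 2*a := by have hmf := Nat.minFac_dvd (d+2*a); rwa [h] at hmf
          have hsa : (d+a) ∣ a := by
            have h2 := Nat.dvd_sub hst (dvd_refl (d+a))
            have he : d + 2*a - (d+a) = a := by omega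
            rwa [he] at h2
          have := Nat.le_of_dvd ha0 hsa
          omega
        have he : (d+2*a).minFac = d + 2*a := by omega
        rwa [← he]
      by_cases hd3' : d = 3
      · -- d = 3, forced a = 2
        subst hd3'
        have hdvd : (a+1) ∣ 3 + 3*a := ⟨3, by ring⟩
        have hma : (a+1) ∣ n := hdvd.trans hDu
        have hc := key (a+1) hma (by omega) (sqlt _ (by omega))
        have ha1 : a = 2 := by omega
        subst ha1
        norm_num at hDs hDt hDu hsq3
        have h45 : 9 * 5 ∣ n :=
          (show Nat.Coprime 9 5 by decide).mul_dvd_of_dvd_of_dvd hDu hDs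
        have h315 : 45 * 7 ∣ n :=
          (show Nat.Coprime 45 7 by decide).mul_dvd_of_dvd_of_dvd (by simpa using h45) hDt
        have hn315 : 315 ≤ n := Nat.le_of_dvd hn (by simpa using h315)
        have h15 : (15:ℕ) ∣ n := dvd_trans ⟨21, by norm_num⟩ (show (315:ℕ) ∣ n by simpa using h315)
        have hc15 := key 15 h15 (by omega) (by omega)
        omega
      · -- d ≥ 5
        have hd5 : 5 ≤ d := by
          rcases Nat.lt_or_ge d 5 with h | h
          · interval_cases d
            · exact absurd rfl hd3'
            · norm_num at hdprime
          · exact h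
        have huprime : (d+3*a).Prime := by
          have hq := Nat.minFac_prime (show d + 3*a ≠ 1 by omega)
          have hqn : (d+3*a).minFac ∣ n := (Nat.minFac_dvd (d+3*a)).trans hDu
          have hqle : (d+3*a).minFac ≤ d + 3*a := Nat.minFac_le (by omega)
          have hc := key _ hqn hq.one_lt (sqlt _ (by omega))
          have hnd : (d+3*a).minFac ≠ d := by
            intro h
            have hdt : d ∣ d + 3*a := by have hmf := Nat.minFac_dvd (d+3*a); rwa [h] at hmf
            have h3a : d ∣ 3*a := by
              have h2 := Nat.dvd_sub hdt (dvd_refl d)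
              have he : d + 3*a - d = 3*a := by omega
              rwa [he] at h2
            rcases (Nat.Prime.dvd_mul hdprime).mp h3a with h | h
            · exact absurd (Nat.le_of_dvd (by omega) h) (by omega)
            · exact hda h
          have hns : (d+3*a).minFac ≠ d + a := by
            intro h
            have hst : (d+a) ∣ d + 3*a := by have hmf := Nat.minFac_dvd (d+3*a); rwa [h] at hmf
            have hs2a : (d+a) ∣ 2*a := by
              have h2 := Nat.dvd_sub hst (dvd_refl (d+a))
              have he : d + 3*a - (d+a) = 2*a := by omega
              rwa [he] at h2
            rcases (Nat.Prime.dvd_mul hsprime).mp hs2a with h | h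
            · exact absurd (Nat.le_of_dvd (by omega) h) (by omega)
            · have := Nat.le_of_dvd ha0 h
              omega
          have hnt : (d+3*a).minFac ≠ d + 2*a := by
            intro h
            have hst : (d+2*a) ∣ d + 3*a := by have hmf := Nat.minFac_dvd (d+3*a); rwa [h] at hmf
            have hta : (d+2*a) ∣ a := by
              have h2 := Nat.dvd_sub hst (dvd_refl (d+2*a))
              have he : d + 3*a - (d+2*a) = a := by omega
              rwa [he] at h2
            have := Nat.le_of_dvd ha0 hta
            omega
          have he : (d+3*a).minFac = d + 3*a := by omega
          rwa [← he]
        have c_ds : Nat.Coprime d (d+a) := (Nat.coprime_primes hdprime hsprime).mpr (by omega)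
        have c_dt : Nat.Coprime d (d+2*a) := (Nat.coprime_primes hdprime htprime).mpr (by omega)
        have c_du : Nat.Coprime d (d+3*a) := (Nat.coprime_primes hdprime huprime).mpr (by omega)
        have c_st : Nat.Coprime (d+a) (d+2*a) := (Nat.coprime_primes hsprime htprime).mpr (by omega)
        have c_su : Nat.Coprime (d+a) (d+3*a) := (Nat.coprime_primes hsprime huprime).mpr (by omega)
        have c_tu : Nat.Coprime (d+2*a) (d+3*a) := (Nat.coprime_primes htprime huprime).mpr (by omega)
        have hds : d*(d+a) ∣ n := c_ds.mul_dvd_of_dvd_of_dvd hDd hDs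
        have hdst : d*(d+a)*(d+2*a) ∣ n := (c_dt.mul c_st).mul_dvd_of_dvd_of_dvd hds hDt
        have hdstu : d*(d+a)*(d+2*a)*(d+3*a) ∣ n :=
          ((c_du.mul c_su).mul c_tu).mul_dvd_of_dvd_of_dvd hdst hDu
        have hge : d*(d+a)*(d+2*a)*(d+3*a) ≤ n := Nat.le_of_dvd hn hdstu
        have hX0 : 0 < d*(d+a) := Nat.mul_pos hd0 (by omega)
        have h1 : d*(d+a) < (d+2*a)*(d+3*a) :=
          mul_lt_mul'' (show d < d+2*a by omega) (show d+a < d+3*a by omega) (Nat.zero_le _) (Nat.zero_le _)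
        have hsq : (d*(d+a))^2 < n := by
          calc (d*(d+a))^2 = (d*(d+a))*(d*(d+a)) := sq (d*(d+a))
          _ < (d*(d+a))*((d+2*a)*(d+3*a)) := by exact mul_lt_mul_of_pos_left h1 hX0
          _ = d*(d+a)*(d+2*a)*(d+3*a) := by ring
          _ ≤ n := hge
        have hone : 1 < d*(d+a) := by
          calc 1 < d := hd1
          _ ≤ d*(d+a) := Nat.le_mul_of_pos_right d (by omega)
        have hkey := key (d*(d+a)) hds hone hsq
        have hbig : 5*(d+a) ≤ d*(d+a) := Nat.mul_le_mul_right (d+a) hd5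
        generalize d*(d+a) = X at hkey hbig
        omega
end

section
/- Let p < q be primes. Then for n = p q^4 the set A_n = {p, q, pq, q^2} is not in arithmetic progression, and for n = p^4 q the set A_n is not in arithmetic progression. -/
lemma isAP_four {w x y z : ℕ} (h1 : w < x) (h2 : x < y) (h3 : y < z)
    (hAP : IsAP ({w, x, y, z} : Finset ℕ)) :
    ∃ a, 0 < a ∧ x = w + a ∧ y = w + 2 * a ∧ z = w + 3 * a := by
  obtain ⟨d, a, hd, ha, hS⟩ := hAP
  have hcard : ({w, x, y, z} : Finset ℕ).card = 4 := by
    rw [Finset.card_insert_of_notMem (by simp; omega),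
      Finset.card_insert_of_notMem (by simp; omega),
      Finset.card_insert_of_notMem (by simp; omega), Finset.card_singleton]
  rw [hcard] at hS
  have mem : ∀ u ∈ ({w, x, y, z} : Finset ℕ), ∃ i < 4, u = d + i * a := by
    intro u hu
    rw [hS] at hu
    simp only [Finset.mem_image, Finset.mem_range] at hu
    obtain ⟨i, hi, hiu⟩ := hu
    exact ⟨i, hi, hiu.symm⟩
  obtain ⟨iw, hiw, ew⟩ := mem w (by simp)
  obtain ⟨ix, hix, ex⟩ := mem x (by simp)
  obtain ⟨iy, hiy, ey⟩ := mem y (by simp)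
  obtain ⟨iz, hiz, ez⟩ := mem z (by simp)
  refine ⟨a, ha, ?_⟩
  interval_cases iw <;> interval_cases ix <;> interval_cases iy <;> interval_cases iz <;> omega
lemma dvd_helper {p q k d : ℕ} (hp : p.Prime) (hq : q.Prime) (h : d ∣ p * q ^ k) :
    ∃ j ≤ k, d = q ^ j ∨ d = p * q ^ j := by
  obtain ⟨a, b, ha, hb, rfl⟩ := exists_dvd_and_dvd_of_dvd_mul h
  obtain ⟨j, hj, rfl⟩ := (Nat.dvd_prime_pow hq).mp hb
  rcases (Nat.Prime.eq_one_or_self_of_dvd hp a ha) with rfl | rfl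
  · exact ⟨j, hj, Or.inl (one_mul _)⟩
  · exact ⟨j, hj, Or.inr rfl⟩

lemma A_pq4 {p q : ℕ} (hp : p.Prime) (hq : q.Prime) (hpq : p < q) :
    A (p * q ^ 4) = ({p, q, p * q, q ^ 2} : Finset ℕ) := by
  have hp2 : 2 ≤ p := hp.two_le
  have hq3 : 3 ≤ q := by omega
  have hq2 : q ≤ q ^ 2 := by nlinarith
  have hq4 : q ≤ q ^ 4 := by nlinarith
  have hq24 : q ^ 2 ≤ q ^ 4 := by nlinarith
  have hq4pos : 0 < q ^ 4 := by positivity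
  have hpq2 : p < q ^ 2 := by omega
  have hn : p * q ^ 4 ≠ 0 := by positivity
  have hkey1 : p ^ 2 < p * q ^ 4 := by nlinarith
  have hkey2 : q ^ 2 < p * q ^ 4 := by nlinarith
  have hkey3 : (p * q) ^ 2 < p * q ^ 4 := by
    nlinarith [mul_lt_mul_of_pos_left hpq2 (show 0 < p * q ^ 2 by positivity)]
  have hkey4 : (q ^ 2) ^ 2 < p * q ^ 4 := by
    nlinarith [mul_lt_mul_of_pos_right (show 1 < p by omega) hq4pos]
  have hone3 : 1 < p * q := by nlinarith
  have hone4 : 1 < q ^ 2 := by omega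
  ext d
  simp only [A, Finset.mem_filter, Nat.mem_divisors, Finset.mem_insert, Finset.mem_singleton]
  constructor
  · rintro ⟨⟨hdvd, -⟩, hd1, hd2⟩
    obtain ⟨j, hj, hc⟩ := dvd_helper hp hq hdvd
    interval_cases j <;> rcases hc with rfl | rfl
    · norm_num at hd1
    · left; simp
    · right; left; exact pow_one q
    · right; right; left; rw [pow_one]
    · right; right; right; rfl
    · exfalso
      have h : p * p < p := Nat.lt_of_mul_lt_mul_right (a := q ^ 4)
        (by calc p * p * q ^ 4 = (p * q ^ 2) ^ 2 := by ring
              _ < p * q ^ 4 := hd2)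
      nlinarith
    · exfalso
      have h : q ^ 2 < p := Nat.lt_of_mul_lt_mul_right (a := q ^ 4)
        (by calc q ^ 2 * q ^ 4 = (q ^ 3) ^ 2 := by ring
              _ < p * q ^ 4 := hd2)
      omega
    · exfalso
      have h : p * p * q ^ 2 < p := Nat.lt_of_mul_lt_mul_right (a := q ^ 4)
        (by calc p * p * q ^ 2 * q ^ 4 = (p * q ^ 3) ^ 2 := by ring
              _ < p * q ^ 4 := hd2)
      nlinarith
    · exfalso
      have h : q ^ 4 < p := Nat.lt_of_mul_lt_mul_right (a := q ^ 4)
        (by calc q ^ 4 * q ^ 4 = (q ^ 4) ^ 2 := by ring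
              _ < p * q ^ 4 := hd2)
      omega
    · exfalso
      have h : p * p * q ^ 4 < p := Nat.lt_of_mul_lt_mul_right (a := q ^ 4)
        (by calc p * p * q ^ 4 * q ^ 4 = (p * q ^ 4) ^ 2 := by ring
              _ < p * q ^ 4 := hd2)
      nlinarith
  · have h1 : p ∣ p * q ^ 4 := dvd_mul_right _ _
    have h2 : q ∣ p * q ^ 4 := Dvd.dvd.mul_left (dvd_pow_self q (by norm_num)) p
    have h3 : p * q ∣ p * q ^ 4 := mul_dvd_mul_left p (dvd_pow_self q (by norm_num))
    have h4 : q ^ 2 ∣ p * q ^ 4 := Dvd.dvd.mul_left (pow_dvd_pow q (by norm_num)) p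
    rintro (rfl | rfl | rfl | rfl)
    · exact ⟨⟨h1, hn⟩, by omega, hkey1⟩
    · exact ⟨⟨h2, hn⟩, by omega, hkey2⟩
    · exact ⟨⟨h3, hn⟩, hone3, hkey3⟩
    · exact ⟨⟨h4, hn⟩, hone4, hkey4⟩
section p4q
variable {p q : ℕ}

lemma A_p4q_forward (hp : p.Prime) (hq : q.Prime) (hpq : p < q) {d : ℕ}
    (hd : d ∈ A (p ^ 4 * q)) :
    (d = p ∧ True) ∨ (d = p ^ 2 ∧ True) ∨ (d = p ^ 3 ∧ p ^ 2 < q) ∨ (d = p ^ 4 ∧ p ^ 4 < q)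
    ∨ (d = q ∧ q < p ^ 4) ∨ (d = p * q ∧ q < p ^ 2) := by
  have hp2 : 2 ≤ p := hp.two_le
  have hq3 : 3 ≤ q := by omega
  simp only [A, Finset.mem_filter, Nat.mem_divisors] at hd
  obtain ⟨⟨hdvd, -⟩, hd1, hd2⟩ := hd
  rw [mul_comm] at hdvd
  obtain ⟨i, hi, hc⟩ := dvd_helper hq hp hdvd
  interval_cases i <;> rcases hc with rfl | rfl
  · norm_num at hd1
  · right; right; right; right; left
    refine ⟨by simp, ?_⟩
    exact Nat.lt_of_mul_lt_mul_right (a := q)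
      (by calc q * q = (q * p ^ 0) ^ 2 := by ring
            _ < p ^ 4 * q := hd2)
  · left; exact ⟨pow_one p, trivial⟩
  · right; right; right; right; right
    constructor
    · rw [pow_one, mul_comm]
    · exact Nat.lt_of_mul_lt_mul_right (a := q * p ^ 2)
        (by calc q * (q * p ^ 2) = (q * p ^ 1) ^ 2 := by ring
              _ < p ^ 4 * q := hd2
              _ = p ^ 2 * (q * p ^ 2) := by ring)
  · right; left; exact ⟨rfl, trivial⟩
  · exfalso
    have h : q * q < q := Nat.lt_of_mul_lt_mul_right (a := p ^ 4)
      (by calc q * q * p ^ 4 = (q * p ^ 2) ^ 2 := by ring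
            _ < p ^ 4 * q := hd2
            _ = q * p ^ 4 := by ring)
    nlinarith
  · right; right; left
    refine ⟨rfl, ?_⟩
    exact Nat.lt_of_mul_lt_mul_right (a := p ^ 4)
      (by calc p ^ 2 * p ^ 4 = (p ^ 3) ^ 2 := by ring
            _ < p ^ 4 * q := hd2
            _ = q * p ^ 4 := by ring)
  · exfalso
    have h : q * q * p ^ 2 < q := Nat.lt_of_mul_lt_mul_right (a := p ^ 4)
      (by calc q * q * p ^ 2 * p ^ 4 = (q * p ^ 3) ^ 2 := by ring
            _ < p ^ 4 * q := hd2
            _ = q * p ^ 4 := by ring)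
    have h2 : q ≤ q * (q * p ^ 2) := Nat.le_mul_of_pos_right q (by positivity)
    have h3 : q * (q * p ^ 2) = q * q * p ^ 2 := by ring
    omega
  · right; right; right; left
    refine ⟨rfl, ?_⟩
    exact Nat.lt_of_mul_lt_mul_right (a := p ^ 4)
      (by calc p ^ 4 * p ^ 4 = (p ^ 4) ^ 2 := by ring
            _ < p ^ 4 * q := hd2
            _ = q * p ^ 4 := by ring)
  · exfalso
    have h : q * q * p ^ 4 < q := Nat.lt_of_mul_lt_mul_right (a := p ^ 4)
      (by calc q * q * p ^ 4 * p ^ 4 = (q * p ^ 4) ^ 2 := by ring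
            _ < p ^ 4 * q := hd2
            _ = q * p ^ 4 := by ring)
    have h2 : q ≤ q * (q * p ^ 4) := Nat.le_mul_of_pos_right q (by positivity)
    have h3 : q * (q * p ^ 4) = q * q * p ^ 4 := by ring
    omega

lemma mem_A_p4q (hp : p.Prime) (hq : q.Prime) {d : ℕ}
    (h1 : d ∣ p ^ 4 * q) (h2 : 1 < d) (h3 : d ^ 2 < p ^ 4 * q) : d ∈ A (p ^ 4 * q) := by
  have : p ^ 4 * q ≠ 0 := by
    have := hp.pos; have := hq.pos; positivity
  simp only [A, Finset.mem_filter, Nat.mem_divisors]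
  exact ⟨⟨h1, this⟩, h2, h3⟩

lemma dvd_p_p4q : p ∣ p ^ 4 * q := dvd_mul_of_dvd_left (dvd_pow_self p (by norm_num)) q
lemma dvd_p2_p4q : p ^ 2 ∣ p ^ 4 * q := dvd_mul_of_dvd_left (pow_dvd_pow p (by norm_num)) q
lemma dvd_p3_p4q : p ^ 3 ∣ p ^ 4 * q := dvd_mul_of_dvd_left (pow_dvd_pow p (by norm_num)) q
lemma dvd_p4_p4q : p ^ 4 ∣ p ^ 4 * q := dvd_mul_right _ _
lemma dvd_q_p4q : q ∣ p ^ 4 * q := dvd_mul_left _ _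
lemma dvd_pq_p4q : p * q ∣ p ^ 4 * q := mul_dvd_mul (dvd_pow_self p (by norm_num)) dvd_rfl
end p4q

section cases
variable {p q : ℕ}

lemma A_p4q_case1 (hp : p.Prime) (hq : q.Prime) (hpq : p < q) (hcase : q < p ^ 2) :
    A (p ^ 4 * q) = ({p, q, p ^ 2, p * q} : Finset ℕ) := by
  have hp2 : 2 ≤ p := hp.two_le
  have hq3 : 3 ≤ q := by omega
  have hp24 : p ^ 2 ≤ p ^ 4 := Nat.pow_le_pow_right (by omega) (by norm_num)
  have hA : p ^ 4 < p ^ 4 * q := by nlinarith [pow_pos hp.pos 4]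
  ext d
  simp only [Finset.mem_insert, Finset.mem_singleton]
  constructor
  · intro hd
    rcases A_p4q_forward hp hq hpq hd with ⟨rfl, -⟩ | ⟨rfl, -⟩ | ⟨rfl, h⟩ | ⟨rfl, h⟩
      | ⟨rfl, h⟩ | ⟨rfl, h⟩ <;> [tauto; tauto; omega; omega; tauto; tauto]
  · intro hmem
    have m1 := mem_A_p4q hp hq dvd_p_p4q (by omega) (by calc p ^ 2 ≤ p ^ 4 := hp24
        _ < p ^ 4 * q := hA)
    have m2 := mem_A_p4q hp hq dvd_q_p4q (by omega) (by calc q ^ 2 = q * q := sq q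
        _ < p ^ 4 * q := mul_lt_mul_of_pos_right (by omega) (by omega))
    have m3 := mem_A_p4q hp hq dvd_p2_p4q (by nlinarith) (by calc (p ^ 2) ^ 2 = p ^ 4 := by ring
        _ < p ^ 4 * q := hA)
    have m4 := mem_A_p4q hp hq dvd_pq_p4q (by nlinarith)
        (by calc (p * q) ^ 2 = q * (p ^ 2 * q) := by ring
              _ < p ^ 2 * (p ^ 2 * q) := mul_lt_mul_of_pos_right hcase (by positivity)
              _ = p ^ 4 * q := by ring)
    rcases hmem with rfl | rfl | rfl | rfl <;> assumption

lemma A_p4q_case2 (hp : p.Prime) (hq : q.Prime) (hpq : p < q) (hc1 : p ^ 2 < q)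
    (hc2 : q < p ^ 3) :
    A (p ^ 4 * q) = ({p, p ^ 2, q, p ^ 3} : Finset ℕ) := by
  have hp2 : 2 ≤ p := hp.two_le
  have hq3 : 3 ≤ q := by omega
  have hp24 : p ^ 2 ≤ p ^ 4 := Nat.pow_le_pow_right (by omega) (by norm_num)
  have hp34 : p ^ 3 ≤ p ^ 4 := Nat.pow_le_pow_right (by omega) (by norm_num)
  have hA : p ^ 4 < p ^ 4 * q := by nlinarith [pow_pos hp.pos 4]
  ext d
  simp only [Finset.mem_insert, Finset.mem_singleton]
  constructor
  · intro hd
    rcases A_p4q_forward hp hq hpq hd with ⟨rfl, -⟩ | ⟨rfl, -⟩ | ⟨rfl, h⟩ | ⟨rfl, h⟩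
      | ⟨rfl, h⟩ | ⟨rfl, h⟩ <;> [tauto; tauto; tauto; omega; tauto; omega]
  · intro hmem
    have m1 := mem_A_p4q hp hq dvd_p_p4q (by omega) (by calc p ^ 2 ≤ p ^ 4 := hp24
        _ < p ^ 4 * q := hA)
    have m2 := mem_A_p4q hp hq dvd_p2_p4q (by nlinarith) (by calc (p ^ 2) ^ 2 = p ^ 4 := by ring
        _ < p ^ 4 * q := hA)
    have m3 := mem_A_p4q hp hq dvd_q_p4q (by omega) (by calc q ^ 2 = q * q := sq q
        _ < p ^ 4 * q := mul_lt_mul_of_pos_right (by omega) (by omega))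
    have m4 := mem_A_p4q hp hq dvd_p3_p4q (by nlinarith)
        (by calc (p ^ 3) ^ 2 = p ^ 2 * p ^ 4 := by ring
              _ < q * p ^ 4 := mul_lt_mul_of_pos_right hc1 (by positivity)
              _ = p ^ 4 * q := by ring)
    rcases hmem with rfl | rfl | rfl | rfl <;> assumption

lemma A_p4q_case3 (hp : p.Prime) (hq : q.Prime) (hpq : p < q) (hc1 : p ^ 3 < q)
    (hc2 : q < p ^ 4) :
    A (p ^ 4 * q) = ({p, p ^ 2, p ^ 3, q} : Finset ℕ) := by
  have hp2 : 2 ≤ p := hp.two_le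
  have hq3 : 3 ≤ q := by omega
  have hp23 : p ^ 2 ≤ p ^ 3 := Nat.pow_le_pow_right (by omega) (by norm_num)
  have hp24 : p ^ 2 ≤ p ^ 4 := Nat.pow_le_pow_right (by omega) (by norm_num)
  have hA : p ^ 4 < p ^ 4 * q := by nlinarith [pow_pos hp.pos 4]
  ext d
  simp only [Finset.mem_insert, Finset.mem_singleton]
  constructor
  · intro hd
    rcases A_p4q_forward hp hq hpq hd with ⟨rfl, -⟩ | ⟨rfl, -⟩ | ⟨rfl, h⟩ | ⟨rfl, h⟩
      | ⟨rfl, h⟩ | ⟨rfl, h⟩ <;> [tauto; tauto; tauto; omega; tauto; omega]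
  · intro hmem
    have m1 := mem_A_p4q hp hq dvd_p_p4q (by omega) (by calc p ^ 2 ≤ p ^ 4 := hp24
        _ < p ^ 4 * q := hA)
    have m2 := mem_A_p4q hp hq dvd_p2_p4q (by nlinarith) (by calc (p ^ 2) ^ 2 = p ^ 4 := by ring
        _ < p ^ 4 * q := hA)
    have m3 := mem_A_p4q hp hq dvd_p3_p4q (by nlinarith)
        (by calc (p ^ 3) ^ 2 = p ^ 2 * p ^ 4 := by ring
              _ < q * p ^ 4 := mul_lt_mul_of_pos_right (by omega) (by positivity)
              _ = p ^ 4 * q := by ring)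
    have m4 := mem_A_p4q hp hq dvd_q_p4q (by omega) (by calc q ^ 2 = q * q := sq q
        _ < p ^ 4 * q := mul_lt_mul_of_pos_right hc2 (by omega))
    rcases hmem with rfl | rfl | rfl | rfl <;> assumption

lemma A_p4q_case4 (hp : p.Prime) (hq : q.Prime) (hpq : p < q) (hcase : p ^ 4 < q) :
    A (p ^ 4 * q) = ({p, p ^ 2, p ^ 3, p ^ 4} : Finset ℕ) := by
  have hp2 : 2 ≤ p := hp.two_le
  have hq3 : 3 ≤ q := by omega
  have hp24 : p ^ 2 ≤ p ^ 4 := Nat.pow_le_pow_right (by omega) (by norm_num)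
  have hp34 : p ^ 3 ≤ p ^ 4 := Nat.pow_le_pow_right (by omega) (by norm_num)
  have hA : p ^ 4 < p ^ 4 * q := by nlinarith [pow_pos hp.pos 4]
  ext d
  simp only [Finset.mem_insert, Finset.mem_singleton]
  constructor
  · intro hd
    rcases A_p4q_forward hp hq hpq hd with ⟨rfl, -⟩ | ⟨rfl, -⟩ | ⟨rfl, h⟩ | ⟨rfl, h⟩
      | ⟨rfl, h⟩ | ⟨rfl, h⟩ <;> [tauto; tauto; tauto; tauto; omega; omega]
  · intro hmem
    have m1 := mem_A_p4q hp hq dvd_p_p4q (by omega) (by calc p ^ 2 ≤ p ^ 4 := hp24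
        _ < p ^ 4 * q := hA)
    have m2 := mem_A_p4q hp hq dvd_p2_p4q (by nlinarith) (by calc (p ^ 2) ^ 2 = p ^ 4 := by ring
        _ < p ^ 4 * q := hA)
    have m3 := mem_A_p4q hp hq dvd_p3_p4q (by nlinarith)
        (by calc (p ^ 3) ^ 2 = p ^ 2 * p ^ 4 := by ring
              _ < q * p ^ 4 := mul_lt_mul_of_pos_right (by omega) (by positivity)
              _ = p ^ 4 * q := by ring)
    have m4 := mem_A_p4q hp hq dvd_p4_p4q (by nlinarith)
        (by calc (p ^ 4) ^ 2 = p ^ 4 * p ^ 4 := by ring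
              _ < q * p ^ 4 := mul_lt_mul_of_pos_right hcase (by positivity)
              _ = p ^ 4 * q := by ring)
    rcases hmem with rfl | rfl | rfl | rfl <;> assumption

end cases


theorem statement_18 (p q : ℕ) (hp : p.Prime) (hq : q.Prime) (hpq : p < q) :
    (A (p * q ^ 4) = ({p, q, p * q, q ^ 2} : Finset ℕ) ∧ ¬ IsAP (A (p * q ^ 4))) ∧
    ¬ IsAP (A (p ^ 4 * q)) := by
  have hp2 : 2 ≤ p := hp.two_le
  have hq3 : 3 ≤ q := by omega
  have hp2' : (2:ℤ) ≤ (p:ℤ) := by exact_mod_cast hp2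
  have hq3' : (3:ℤ) ≤ (q:ℤ) := by exact_mod_cast hq3
  have hppos : (0:ℤ) < (p:ℤ) := by linarith
  have hsq : (0:ℤ) < ((p:ℤ) - 1) ^ 2 := by nlinarith
  have hcube : (0:ℤ) < (p:ℤ) * ((p:ℤ) - 1) ^ 2 := mul_pos hppos hsq
  constructor
  · refine ⟨A_pq4 hp hq hpq, ?_⟩
    intro hAP
    rw [A_pq4 hp hq hpq] at hAP
    have o2 : q < p * q := by nlinarith
    have o3 : p * q < q ^ 2 := by
      calc p * q < q * q := mul_lt_mul_of_pos_right hpq (by omega)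
        _ = q ^ 2 := (sq q).symm
    obtain ⟨a, ha, e1, e2, e3⟩ := isAP_four hpq o2 o3 hAP
    have E1 : (q:ℤ) = p + a := by exact_mod_cast e1
    have E2 : (p:ℤ) * q = p + 2 * a := by exact_mod_cast e2
    nlinarith [E1, E2, hp2', hq3']
  · intro hAP
    have hnd : ∀ k, 1 ≤ k → q ≠ p ^ k := by
      intro k hk h
      have hd : p ∣ q := h ▸ dvd_pow_self p (by omega)
      have := (Nat.prime_dvd_prime_iff_eq hp hq).mp hd
      omega
    rcases Nat.lt_trichotomy q (p ^ 2) with h2 | h2 | h2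
    · -- A = {p, q, p^2, p*q}
      rw [A_p4q_case1 hp hq hpq h2] at hAP
      have o3 : p ^ 2 < p * q := by
        calc p ^ 2 = p * p := sq p
          _ < p * q := mul_lt_mul_of_pos_left hpq (by omega)
      obtain ⟨a, ha, e1, e2, e3⟩ := isAP_four hpq h2 o3 hAP
      have E1 : (q:ℤ) = p + a := by exact_mod_cast e1
      have E2 : ((p:ℤ)) ^ 2 = p + 2 * a := by exact_mod_cast e2
      have E3 : (p:ℤ) * q = p + 3 * a := by exact_mod_cast e3
      have F1 : 2 * (q:ℤ) = p ^ 2 + p := by linarith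
      have Fa : 2 * ((p:ℤ) * q) + p = 3 * p ^ 2 := by linarith
      have F3 : (p:ℤ) * (2 * q) = p * (p ^ 2 + p) := by rw [F1]
      nlinarith [Fa, F3, hcube]
    · exact absurd h2 (hnd 2 (by norm_num))
    · rcases Nat.lt_trichotomy q (p ^ 3) with h3 | h3 | h3
      · -- A = {p, p^2, q, p^3}
        rw [A_p4q_case2 hp hq hpq h2 h3] at hAP
        have o1 : p < p ^ 2 := by nlinarith
        obtain ⟨a, ha, e1, e2, e3⟩ := isAP_four o1 h2 h3 hAP
        have E1 : ((p:ℤ)) ^ 2 = p + a := by exact_mod_cast e1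
        have E3 : ((p:ℤ)) ^ 3 = p + 3 * a := by exact_mod_cast e3
        have G : ((p:ℤ)) ^ 3 + 2 * p = 3 * p ^ 2 := by linarith
        have hple : p ≤ 2 := by
          by_contra hc
          push_neg at hc
          have h3p : (3:ℤ) ≤ (p:ℤ) := by exact_mod_cast hc
          nlinarith [G, h3p, mul_le_mul_of_nonneg_right h3p (sq_nonneg (p:ℤ))]
        have hpe : p = 2 := by omega
        subst hpe
        norm_num at e1
        have hq6 : q = 6 := by omega
        rw [hq6] at hq
        norm_num at hq
      · exact absurd h3 (hnd 3 (by norm_num))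
      · rcases Nat.lt_trichotomy q (p ^ 4) with h4 | h4 | h4
        · -- A = {p, p^2, p^3, q}
          rw [A_p4q_case3 hp hq hpq h3 h4] at hAP
          have o1 : p < p ^ 2 := by nlinarith
          have o2 : p ^ 2 < p ^ 3 := Nat.pow_lt_pow_right (by omega) (by norm_num)
          obtain ⟨a, ha, e1, e2, e3⟩ := isAP_four o1 o2 h3 hAP
          have E1 : ((p:ℤ)) ^ 2 = p + a := by exact_mod_cast e1
          have E2 : ((p:ℤ)) ^ 3 = p + 2 * a := by exact_mod_cast e2
          nlinarith [E1, E2, hcube]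
        · exact absurd h4 (hnd 4 (by norm_num))
        · -- A = {p, p^2, p^3, p^4}
          rw [A_p4q_case4 hp hq hpq h4] at hAP
          have o1 : p < p ^ 2 := by nlinarith
          have o2 : p ^ 2 < p ^ 3 := Nat.pow_lt_pow_right (by omega) (by norm_num)
          have o3 : p ^ 3 < p ^ 4 := Nat.pow_lt_pow_right (by omega) (by norm_num)
          obtain ⟨a, ha, e1, e2, e3⟩ := isAP_four o1 o2 o3 hAP
          have E1 : ((p:ℤ)) ^ 2 = p + a := by exact_mod_cast e1
          have E2 : ((p:ℤ)) ^ 3 = p + 2 * a := by exact_mod_cast e2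
          nlinarith [E1, E2, hcube]
end
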